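/- arXiv:0806.3998 — 4 statements merged into one kernel-verified Lean document; each statement's English description precedes it below -/
import Mathlib

section
/- Let Γ be a special torsion-free affine connection on a connected open set U ⊆ ℝⁿ. Then the set of smooth solutions σ of the metrisability equation for Γ is a real vector space of dimension at most (n+1)(n+2)/2 (the degree of mobility of the projective structure is at most (n+1)(n+2)/2). -/
open scoped BigOperators

/-!  Common setup: we work on open subsets `U` of `ℝⁿ` (modelled as `Fin n → ℝ`).
A torsion-free affine connection is recorded through its Christoffel symbols
`Γ x a b c = Γ_a{}^b{}_c`, symmetric in `a, c`.  `pd F a x` is the partial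
derivative `∂_a F (x)`. -/

/-- Partial derivative `∂_a F` at `x`. -/
noncomputable def pd {n : ℕ} (F : (Fin n → ℝ) → ℝ) (a : Fin n) (x : Fin n → ℝ) : ℝ :=
  fderiv ℝ F x (Pi.single a 1)

/-- Kronecker delta. -/
def kron {n : ℕ} (a b : Fin n) : ℝ := if a = b then 1 else 0

/-- Curvature tensor `ρ_{ab}{}^c{}_d` of a connection with Christoffel symbols
`Γ x a b c = Γ_a{}^b{}_c`. -/
noncomputable def curv {n : ℕ} (Γ : (Fin n → ℝ) → Fin n → Fin n → Fin n → ℝ)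
    (x : Fin n → ℝ) (a b c d : Fin n) : ℝ :=
  pd (fun y => Γ y b c d) a x - pd (fun y => Γ y a c d) b x
    + ∑ e, Γ x a c e * Γ x b e d - ∑ e, Γ x b c e * Γ x a e d

/-- Ricci tensor `Ric_{ad} = ρ_{ba}{}^b{}_d`. -/
noncomputable def ricci {n : ℕ} (Γ : (Fin n → ℝ) → Fin n → Fin n → Fin n → ℝ)
    (x : Fin n → ℝ) (a d : Fin n) : ℝ :=
  ∑ b, curv Γ x b a b d

/-- Projective Schouten tensor `P_{ab} = Ric_{ab}/(n-1)`. -/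
noncomputable def projP {n : ℕ} (Γ : (Fin n → ℝ) → Fin n → Fin n → Fin n → ℝ)
    (x : Fin n → ℝ) (a b : Fin n) : ℝ :=
  ricci Γ x a b / ((n : ℝ) - 1)

/-- Projective Weyl tensor `W_{ab}{}^c{}_d = ρ_{ab}{}^c{}_d - δ_a{}^c P_{bd} + δ_b{}^c P_{ad}`. -/
noncomputable def projW {n : ℕ} (Γ : (Fin n → ℝ) → Fin n → Fin n → Fin n → ℝ)
    (x : Fin n → ℝ) (a b c d : Fin n) : ℝ :=
  curv Γ x a b c d - kron a c * projP Γ x b d + kron b c * projP Γ x a d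

/-- Covariant derivative `∇_a P_{bc}` of the projective Schouten tensor. -/
noncomputable def nablaP {n : ℕ} (Γ : (Fin n → ℝ) → Fin n → Fin n → Fin n → ℝ)
    (x : Fin n → ℝ) (a b c : Fin n) : ℝ :=
  pd (fun y => projP Γ y b c) a x - ∑ d, Γ x a d b * projP Γ x d c
    - ∑ d, Γ x a d c * projP Γ x b d

/-- Cotton–York tensor `Y_{abc} = ½(∇_a P_{bc} - ∇_b P_{ac})`. -/
noncomputable def cottonY {n : ℕ} (Γ : (Fin n → ℝ) → Fin n → Fin n → Fin n → ℝ)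
    (x : Fin n → ℝ) (a b c : Fin n) : ℝ :=
  (nablaP Γ x a b c - nablaP Γ x b a c) / 2

/-- Covariant derivative `∇_a σ^{bc}` of a contravariant symmetric 2-tensor field. -/
noncomputable def nablaSig {n : ℕ} (Γ : (Fin n → ℝ) → Fin n → Fin n → Fin n → ℝ)
    (σ : (Fin n → ℝ) → Fin n → Fin n → ℝ) (x : Fin n → ℝ) (a b c : Fin n) : ℝ :=
  pd (fun y => σ y b c) a x + ∑ d, Γ x a b d * σ x d c + ∑ d, Γ x a c d * σ x b d

/-- Covariant derivative `∇_a μ^b` of a vector field. -/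
noncomputable def nablaVec {n : ℕ} (Γ : (Fin n → ℝ) → Fin n → Fin n → Fin n → ℝ)
    (μ : (Fin n → ℝ) → Fin n → ℝ) (x : Fin n → ℝ) (a b : Fin n) : ℝ :=
  pd (fun y => μ y b) a x + ∑ c, Γ x a b c * μ x c

namespace PDkit
variable {n : ℕ} {U : Set (Fin n → ℝ)} {f g : (Fin n → ℝ) → ℝ} {x : Fin n → ℝ} {a b : Fin n}
theorem pd_congr_nhds (h : f =ᶠ[nhds x] g) : pd f a x = pd g a x := by
  unfold pd; rw [h.fderiv_eq]
theorem pd_congr_open (hU : IsOpen U) (h : ∀ y ∈ U, f y = g y) (hx : x ∈ U) :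
    pd f a x = pd g a x :=
  pd_congr_nhds (Filter.eventuallyEq_iff_exists_mem.2 ⟨U, hU.mem_nhds hx, h⟩)
theorem diffAt_of_contDiffOn (hU : IsOpen U) (hf : ContDiffOn ℝ (⊤ : ℕ∞) f U) (hx : x ∈ U) :
    DifferentiableAt ℝ f x :=
  (hf.contDiffAt (hU.mem_nhds hx)).differentiableAt (by norm_num)
theorem pd_add (hf : DifferentiableAt ℝ f x) (hg : DifferentiableAt ℝ g x) :
    pd (fun y => f y + g y) a x = pd f a x + pd g a x := by
  unfold pd; rw [fderiv_fun_add hf hg]; rfl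
theorem pd_sub (hf : DifferentiableAt ℝ f x) (hg : DifferentiableAt ℝ g x) :
    pd (fun y => f y - g y) a x = pd f a x - pd g a x := by
  unfold pd; rw [fderiv_fun_sub hf hg]; rfl
theorem pd_mul (hf : DifferentiableAt ℝ f x) (hg : DifferentiableAt ℝ g x) :
    pd (fun y => f y * g y) a x = pd f a x * g x + f x * pd g a x := by
  unfold pd; rw [fderiv_fun_mul hf hg]; simp; ring
theorem pd_const (c : ℝ) : pd (fun _ => c) a x = (0:ℝ) := by
  unfold pd; rw [fderiv_fun_const]; simp
theorem pd_const_mul (c : ℝ) (hf : DifferentiableAt ℝ f x) :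
    pd (fun y => c * f y) a x = c * pd f a x := by
  unfold pd; rw [fderiv_const_mul hf]; simp
theorem pd_neg (hf : DifferentiableAt ℝ f x) :
    pd (fun y => -f y) a x = -pd f a x := by
  unfold pd; rw [fderiv_fun_neg]; simp
theorem pd_sum {ι : Type*} (s : Finset ι) (F : ι → (Fin n → ℝ) → ℝ)
    (hF : ∀ i ∈ s, DifferentiableAt ℝ (F i) x) :
    pd (fun y => ∑ i ∈ s, F i y) a x = ∑ i ∈ s, pd (F i) a x := by
  unfold pd; rw [fderiv_fun_sum hF]; simp
theorem contDiffOn_pd (hU : IsOpen U) (hf : ContDiffOn ℝ (⊤ : ℕ∞) f U) :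
    ContDiffOn ℝ (⊤ : ℕ∞) (fun x => pd f a x) U := by
  have h1 : ContDiffOn ℝ (⊤ : ℕ∞) (fderiv ℝ f) U := hf.fderiv_of_isOpen hU (by exact (by simp))
  exact ContDiffOn.clm_apply h1 contDiffOn_const
theorem pd_comm (hU : IsOpen U) (hf : ContDiffOn ℝ (⊤ : ℕ∞) f U) (hx : x ∈ U) :
    pd (fun y => pd f b y) a x = pd (fun y => pd f a y) b x := by
  have hd : ContDiffOn ℝ (⊤ : ℕ∞) (fderiv ℝ f) U := hf.fderiv_of_isOpen hU (by exact (by simp))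
  have hdx : DifferentiableAt ℝ (fderiv ℝ f) x :=
    (hd.contDiffAt (hU.mem_nhds hx)).differentiableAt (by norm_num)
  have key : ∀ v w, fderiv ℝ (fun y => fderiv ℝ f y v) x w
      = fderiv ℝ (fderiv ℝ f) x w v := by
    intro v w
    have := fderiv_clm_apply (c := fderiv ℝ f) (u := fun _ => v) hdx
      (differentiableAt_const v)
    rw [show (fun y => fderiv ℝ f y v) = (fun y => (fderiv ℝ f y) ((fun _ => v) y)) from rfl,
      this]
    simp
  have hsymm : ∀ v w, fderiv ℝ (fderiv ℝ f) x v w = fderiv ℝ (fderiv ℝ f) x w v := by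
    have hev : ∀ᶠ y in nhds x, HasFDerivAt f (fderiv ℝ f y) y := by
      filter_upwards [hU.mem_nhds hx] with y hy
      exact (diffAt_of_contDiffOn hU hf hy).hasFDerivAt
    exact second_derivative_symmetric_of_eventually hev hdx.hasFDerivAt
  unfold pd
  rw [key, key, hsymm]
end PDkit

open PDkit

namespace DM

variable {n : ℕ}

/-- RHS of the metrisability equation solved for `∂σ`. -/
noncomputable def Ffun (Γ : (Fin n → ℝ) → Fin n → Fin n → Fin n → ℝ)
    (σ : (Fin n → ℝ) → Fin n → Fin n → ℝ) (μ : (Fin n → ℝ) → Fin n → ℝ)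
    (a b c : Fin n) : (Fin n → ℝ) → ℝ := fun x =>
  kron a b * μ x c + kron a c * μ x b - (∑ d, Γ x a b d * σ x d c)
    - (∑ d, Γ x a c d * σ x b d)

noncomputable def Gfun (Γ : (Fin n → ℝ) → Fin n → Fin n → Fin n → ℝ)
    (σ : (Fin n → ℝ) → Fin n → Fin n → ℝ) (μ : (Fin n → ℝ) → Fin n → ℝ)
    (a b c e : Fin n) : (Fin n → ℝ) → ℝ := fun x =>
  -(∑ d, (pd (fun y => Γ y a b d) e x * σ x d c + Γ x a b d * Ffun Γ σ μ e d c x))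
    - (∑ d, (pd (fun y => Γ y a c d) e x * σ x b d + Γ x a c d * Ffun Γ σ μ e b d x))

noncomputable def rhofun (μ : (Fin n → ℝ) → Fin n → ℝ) : (Fin n → ℝ) → ℝ := fun x =>
  (1 / (n : ℝ)) * ∑ a, pd (fun y => μ y a) a x

noncomputable def Hfun (Γ : (Fin n → ℝ) → Fin n → Fin n → Fin n → ℝ)
    (σ : (Fin n → ℝ) → Fin n → Fin n → ℝ) (μ : (Fin n → ℝ) → Fin n → ℝ)
    (e c : Fin n) : (Fin n → ℝ) → ℝ := fun x =>
  (1 / (n : ℝ)) * ∑ a, (Gfun Γ σ μ e a c a x - Gfun Γ σ μ a a c e x)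

section Lemmas

variable {U : Set (Fin n → ℝ)}
  {Γ : (Fin n → ℝ) → Fin n → Fin n → Fin n → ℝ}
  {σ : (Fin n → ℝ) → Fin n → Fin n → ℝ} {μ : (Fin n → ℝ) → Fin n → ℝ}

theorem sm_F (hU : IsOpen U)
    (hΓsm : ∀ a b c, ContDiffOn ℝ (⊤ : ℕ∞) (fun x => Γ x a b c) U)
    (hσsm : ∀ b c, ContDiffOn ℝ (⊤ : ℕ∞) (fun x => σ x b c) U)
    (hμsm : ∀ a, ContDiffOn ℝ (⊤ : ℕ∞) (fun x => μ x a) U)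
    (a b c : Fin n) : ContDiffOn ℝ (⊤ : ℕ∞) (Ffun Γ σ μ a b c) U := by
  unfold Ffun
  apply ContDiffOn.sub
  apply ContDiffOn.sub
  apply ContDiffOn.add
  · exact (contDiffOn_const).mul (hμsm c)
  · exact (contDiffOn_const).mul (hμsm b)
  · exact ContDiffOn.sum fun d _ => (hΓsm a b d).mul (hσsm d c)
  · exact ContDiffOn.sum fun d _ => (hΓsm a c d).mul (hσsm b d)

theorem sm_G (hU : IsOpen U)
    (hΓsm : ∀ a b c, ContDiffOn ℝ (⊤ : ℕ∞) (fun x => Γ x a b c) U)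
    (hσsm : ∀ b c, ContDiffOn ℝ (⊤ : ℕ∞) (fun x => σ x b c) U)
    (hμsm : ∀ a, ContDiffOn ℝ (⊤ : ℕ∞) (fun x => μ x a) U)
    (a b c e : Fin n) : ContDiffOn ℝ (⊤ : ℕ∞) (Gfun Γ σ μ a b c e) U := by
  unfold Gfun
  apply ContDiffOn.sub
  apply ContDiffOn.neg
  · exact ContDiffOn.sum fun d _ => ((contDiffOn_pd hU (hΓsm a b d)).mul (hσsm d c)).add
      ((hΓsm a b d).mul (sm_F hU hΓsm hσsm hμsm e d c))
  · exact ContDiffOn.sum fun d _ => ((contDiffOn_pd hU (hΓsm a c d)).mul (hσsm b d)).add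
      ((hΓsm a c d).mul (sm_F hU hΓsm hσsm hμsm e b d))

theorem sm_rho (hU : IsOpen U)
    (hμsm : ∀ a, ContDiffOn ℝ (⊤ : ℕ∞) (fun x => μ x a) U) :
    ContDiffOn ℝ (⊤ : ℕ∞) (rhofun μ) U := by
  unfold rhofun
  exact contDiffOn_const.mul (ContDiffOn.sum fun a _ => contDiffOn_pd hU (hμsm a))

theorem sm_H (hU : IsOpen U)
    (hΓsm : ∀ a b c, ContDiffOn ℝ (⊤ : ℕ∞) (fun x => Γ x a b c) U)
    (hσsm : ∀ b c, ContDiffOn ℝ (⊤ : ℕ∞) (fun x => σ x b c) U)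
    (hμsm : ∀ a, ContDiffOn ℝ (⊤ : ℕ∞) (fun x => μ x a) U)
    (e c : Fin n) : ContDiffOn ℝ (⊤ : ℕ∞) (Hfun Γ σ μ e c) U := by
  unfold Hfun
  exact contDiffOn_const.mul (ContDiffOn.sum fun a _ =>
    (sm_G hU hΓsm hσsm hμsm e a c a).sub (sm_G hU hΓsm hσsm hμsm a a c e))

end Lemmas
end DM

namespace DM
section Lemmas2
open PDkit
variable {n : ℕ} {U : Set (Fin n → ℝ)}
  {Γ : (Fin n → ℝ) → Fin n → Fin n → Fin n → ℝ}
  {σ : (Fin n → ℝ) → Fin n → Fin n → ℝ} {μ : (Fin n → ℝ) → Fin n → ℝ}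
  {x : Fin n → ℝ}

theorem lem_X (hU : IsOpen U)
    (hΓsm : ∀ a b c, ContDiffOn ℝ (⊤ : ℕ∞) (fun x => Γ x a b c) U)
    (hσsm : ∀ b c, ContDiffOn ℝ (⊤ : ℕ∞) (fun x => σ x b c) U)
    (hμsm : ∀ a, ContDiffOn ℝ (⊤ : ℕ∞) (fun x => μ x a) U)
    (heq : ∀ x ∈ U, ∀ a b c, pd (fun y => σ y b c) a x = Ffun Γ σ μ a b c x)
    (hx : x ∈ U) (a b c e : Fin n) :
    pd (Ffun Γ σ μ a b c) e x
      = kron a b * pd (fun y => μ y c) e x + kron a c * pd (fun y => μ y b) e x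
        + Gfun Γ σ μ a b c e x := by
  have dμ : ∀ c, DifferentiableAt ℝ (fun y => μ y c) x :=
    fun c => diffAt_of_contDiffOn hU (hμsm c) hx
  have dσ : ∀ b c, DifferentiableAt ℝ (fun y => σ y b c) x :=
    fun b c => diffAt_of_contDiffOn hU (hσsm b c) hx
  have dΓ : ∀ a b c, DifferentiableAt ℝ (fun y => Γ y a b c) x :=
    fun a b c => diffAt_of_contDiffOn hU (hΓsm a b c) hx
  have dA : DifferentiableAt ℝ (fun y => kron a b * μ y c) x := (dμ c).const_mul _
  have dB : DifferentiableAt ℝ (fun y => kron a c * μ y b) x := (dμ b).const_mul _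
  have dC : DifferentiableAt ℝ (fun y => ∑ d, Γ y a b d * σ y d c) x :=
    DifferentiableAt.fun_sum fun d _ => (dΓ a b d).fun_mul (dσ d c)
  have dD : DifferentiableAt ℝ (fun y => ∑ d, Γ y a c d * σ y b d) x :=
    DifferentiableAt.fun_sum fun d _ => (dΓ a c d).fun_mul (dσ b d)
  have h1 : pd (Ffun Γ σ μ a b c) e x
      = kron a b * pd (fun y => μ y c) e x + kron a c * pd (fun y => μ y b) e x
        - (∑ d, (pd (fun y => Γ y a b d) e x * σ x d c
            + Γ x a b d * pd (fun y => σ y d c) e x))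
        - ∑ d, (pd (fun y => Γ y a c d) e x * σ x b d
            + Γ x a c d * pd (fun y => σ y b d) e x) := by
    show pd (fun y => kron a b * μ y c + kron a c * μ y b
        - (∑ d, Γ y a b d * σ y d c) - ∑ d, Γ y a c d * σ y b d) e x = _
    rw [pd_sub ((dA.fun_add dB).fun_sub dC) dD, pd_sub (dA.fun_add dB) dC, pd_add dA dB,
      pd_const_mul _ (dμ c), pd_const_mul _ (dμ b),
      pd_sum _ _ (fun d _ => (dΓ a b d).fun_mul (dσ d c)),
      pd_sum _ _ (fun d _ => (dΓ a c d).fun_mul (dσ b d))]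
    have e1 : ∑ d, pd (fun y => Γ y a b d * σ y d c) e x
        = ∑ d, (pd (fun y => Γ y a b d) e x * σ x d c
            + Γ x a b d * pd (fun y => σ y d c) e x) :=
      Finset.sum_congr rfl fun d _ => pd_mul (dΓ a b d) (dσ d c)
    have e2 : ∑ d, pd (fun y => Γ y a c d * σ y b d) e x
        = ∑ d, (pd (fun y => Γ y a c d) e x * σ x b d
            + Γ x a c d * pd (fun y => σ y b d) e x) :=
      Finset.sum_congr rfl fun d _ => pd_mul (dΓ a c d) (dσ b d)
    rw [e1, e2]
  rw [h1]
  simp only [heq x hx]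
  unfold Gfun
  ring

theorem lem_D (hU : IsOpen U)
    (hσsm : ∀ b c, ContDiffOn ℝ (⊤ : ℕ∞) (fun x => σ x b c) U)
    (heq : ∀ x ∈ U, ∀ a b c, pd (fun y => σ y b c) a x = Ffun Γ σ μ a b c x)
    (hx : x ∈ U) (a b c e : Fin n) :
    pd (Ffun Γ σ μ a b c) e x = pd (Ffun Γ σ μ e b c) a x := by
  have h1 : pd (Ffun Γ σ μ a b c) e x
      = pd (fun y => pd (fun z => σ z b c) a y) e x :=
    (pd_congr_open hU (fun y hy => (heq y hy a b c).symm) hx)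
  have h2 : pd (Ffun Γ σ μ e b c) a x
      = pd (fun y => pd (fun z => σ z b c) e y) a x :=
    (pd_congr_open hU (fun y hy => (heq y hy e b c).symm) hx)
  rw [h1, h2, pd_comm hU (hσsm b c) hx]

theorem lem_L2 (hn : 2 ≤ n) (hU : IsOpen U)
    (hΓsm : ∀ a b c, ContDiffOn ℝ (⊤ : ℕ∞) (fun x => Γ x a b c) U)
    (hσsm : ∀ b c, ContDiffOn ℝ (⊤ : ℕ∞) (fun x => σ x b c) U)
    (hμsm : ∀ a, ContDiffOn ℝ (⊤ : ℕ∞) (fun x => μ x a) U)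
    (heq : ∀ x ∈ U, ∀ a b c, pd (fun y => σ y b c) a x = Ffun Γ σ μ a b c x)
    (hx : x ∈ U) (e c : Fin n) :
    pd (fun y => μ y c) e x = kron e c * rhofun μ x + Hfun Γ σ μ e c x := by
  have hnne : (n : ℝ) ≠ 0 := by
    have : (0:ℝ) < n := by exact_mod_cast Nat.lt_of_lt_of_le (by norm_num) hn
    linarith
  have key : ∀ a : Fin n,
      kron a a * pd (fun y => μ y c) e x + kron a c * pd (fun y => μ y a) e x
        + Gfun Γ σ μ a a c e x
      = kron e a * pd (fun y => μ y c) a x + kron e c * pd (fun y => μ y a) a x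
        + Gfun Γ σ μ e a c a x := by
    intro a
    rw [← lem_X hU hΓsm hσsm hμsm heq hx a a c e,
      ← lem_X hU hΓsm hσsm hμsm heq hx e a c a]
    exact lem_D hU hσsm heq hx a a c e
  have hsum := Finset.sum_congr rfl (fun a (_ : a ∈ Finset.univ) => key a)
  rw [Finset.sum_add_distrib, Finset.sum_add_distrib, Finset.sum_add_distrib,
    Finset.sum_add_distrib] at hsum
  have t1 : ∑ a : Fin n, kron a a * pd (fun y => μ y c) e x
      = (n : ℝ) * pd (fun y => μ y c) e x := by
    simp [kron, Finset.sum_const, mul_comm]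
  have t2 : ∑ a : Fin n, kron a c * pd (fun y => μ y a) e x
      = pd (fun y => μ y c) e x := by
    simp [kron, Finset.sum_ite_eq]
  have t3 : ∑ a : Fin n, kron e a * pd (fun y => μ y c) a x
      = pd (fun y => μ y c) e x := by
    simp [kron, Finset.sum_ite_eq]
  have t4 : ∑ a : Fin n, kron e c * pd (fun y => μ y a) a x
      = kron e c * ((n:ℝ) * rhofun μ x) := by
    rw [← Finset.mul_sum]
    unfold rhofun
    field_simp
  rw [t1, t2, t3, t4] at hsum
  have hH : Hfun Γ σ μ e c x
      = (1/(n:ℝ)) * (∑ a, Gfun Γ σ μ e a c a x - ∑ a, Gfun Γ σ μ a a c e x) := by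
    unfold Hfun
    rw [Finset.sum_sub_distrib]
  rw [hH]
  field_simp
  linarith [hsum]

theorem lem_L3 (hn : 2 ≤ n) (hU : IsOpen U)
    (hΓsm : ∀ a b c, ContDiffOn ℝ (⊤ : ℕ∞) (fun x => Γ x a b c) U)
    (hσsm : ∀ b c, ContDiffOn ℝ (⊤ : ℕ∞) (fun x => σ x b c) U)
    (hμsm : ∀ a, ContDiffOn ℝ (⊤ : ℕ∞) (fun x => μ x a) U)
    (heq : ∀ x ∈ U, ∀ a b c, pd (fun y => σ y b c) a x = Ffun Γ σ μ a b c x)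
    (hx : x ∈ U) (f : Fin n) :
    pd (rhofun μ) f x = (1/((n:ℝ)-1))
      * ∑ e, (pd (Hfun Γ σ μ f e) e x - pd (Hfun Γ σ μ e e) f x) := by
  have hnne : ((n : ℝ) - 1) ≠ 0 := by
    have : (2:ℝ) ≤ n := by exact_mod_cast hn
    linarith
  have dρ : DifferentiableAt ℝ (rhofun μ) x := diffAt_of_contDiffOn hU (sm_rho hU hμsm) hx
  have dH : ∀ e c, DifferentiableAt ℝ (Hfun Γ σ μ e c) x :=
    fun e c => diffAt_of_contDiffOn hU (sm_H hU hΓsm hσsm hμsm e c) hx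
  have key : ∀ e c : Fin n,
      kron e c * pd (rhofun μ) f x + pd (Hfun Γ σ μ e c) f x
      = kron f c * pd (rhofun μ) e x + pd (Hfun Γ σ μ f c) e x := by
    intro e c
    have h1 : pd (fun y => pd (fun z => μ z c) e y) f x
        = kron e c * pd (rhofun μ) f x + pd (Hfun Γ σ μ e c) f x := by
      rw [pd_congr_open hU
        (fun y hy => lem_L2 hn hU hΓsm hσsm hμsm heq hy e c) hx,
        pd_add (dρ.const_mul _) (dH e c), pd_const_mul _ dρ]
    have h2 : pd (fun y => pd (fun z => μ z c) f y) e x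
        = kron f c * pd (rhofun μ) e x + pd (Hfun Γ σ μ f c) e x := by
      rw [pd_congr_open hU
        (fun y hy => lem_L2 hn hU hΓsm hσsm hμsm heq hy f c) hx,
        pd_add (dρ.const_mul _) (dH f c), pd_const_mul _ dρ]
    rw [← h1, ← h2, pd_comm hU (hμsm c) hx]
  have hsum := Finset.sum_congr rfl (fun e (_ : e ∈ Finset.univ) => key e e)
  rw [Finset.sum_add_distrib, Finset.sum_add_distrib] at hsum
  have t1 : ∑ e : Fin n, kron e e * pd (rhofun μ) f x
      = (n : ℝ) * pd (rhofun μ) f x := by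
    simp [kron, Finset.sum_const, mul_comm]
  have t2 : ∑ e : Fin n, kron f e * pd (rhofun μ) e x = pd (rhofun μ) f x := by
    simp [kron, Finset.sum_ite_eq]
  rw [t1, t2] at hsum
  rw [Finset.sum_sub_distrib]
  field_simp
  linarith [hsum]

end Lemmas2
end DM


namespace DM
open PDkit
variable {n : ℕ}

/-- Component family: σ-components, μ-components, ρ. -/
noncomputable def compF (σ : (Fin n → ℝ) → Fin n → Fin n → ℝ)
    (μ : (Fin n → ℝ) → Fin n → ℝ) :
    ((Fin n × Fin n) ⊕ (Fin n) ⊕ Unit) → (Fin n → ℝ) → ℝ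
  | Sum.inl p => fun x => σ x p.1 p.2
  | Sum.inr (Sum.inl b) => fun x => μ x b
  | Sum.inr (Sum.inr _) => rhofun μ

noncomputable def Mnorm (σ : (Fin n → ℝ) → Fin n → Fin n → ℝ)
    (μ : (Fin n → ℝ) → Fin n → ℝ) (x : Fin n → ℝ) : ℝ :=
  ‖fun k => compF σ μ k x‖

def DomOn (σ : (Fin n → ℝ) → Fin n → Fin n → ℝ) (μ : (Fin n → ℝ) → Fin n → ℝ)
    (K : Set (Fin n → ℝ)) (P : (Fin n → ℝ) → ℝ) : Prop :=
  ∃ C, ∀ y ∈ K, |P y| ≤ C * Mnorm σ μ y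

section Dom
variable {σ : (Fin n → ℝ) → Fin n → Fin n → ℝ} {μ : (Fin n → ℝ) → Fin n → ℝ}
  {K U : Set (Fin n → ℝ)} {P Q : (Fin n → ℝ) → ℝ}

theorem Mnorm_nonneg (x : Fin n → ℝ) : 0 ≤ Mnorm σ μ x := norm_nonneg _

theorem dom_comp (k : (Fin n × Fin n) ⊕ (Fin n) ⊕ Unit) :
    DomOn σ μ K (compF σ μ k) := by
  refine ⟨1, fun y _ => ?_⟩
  rw [one_mul]
  have := norm_le_pi_norm (fun k => compF σ μ k y) k
  simpa [Real.norm_eq_abs, Mnorm] using this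

theorem dom_congr (h : ∀ y ∈ K, P y = Q y) (hQ : DomOn σ μ K Q) : DomOn σ μ K P := by
  obtain ⟨C, hC⟩ := hQ
  exact ⟨C, fun y hy => by rw [h y hy]; exact hC y hy⟩

theorem dom_add (hP : DomOn σ μ K P) (hQ : DomOn σ μ K Q) :
    DomOn σ μ K (fun y => P y + Q y) := by
  obtain ⟨C, hC⟩ := hP; obtain ⟨D, hD⟩ := hQ
  refine ⟨C + D, fun y hy => ?_⟩
  calc |P y + Q y| ≤ |P y| + |Q y| := abs_add_le _ _
    _ ≤ C * Mnorm σ μ y + D * Mnorm σ μ y := add_le_add (hC y hy) (hD y hy)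
    _ = (C + D) * Mnorm σ μ y := by ring

theorem dom_neg (hP : DomOn σ μ K P) : DomOn σ μ K (fun y => -P y) := by
  obtain ⟨C, hC⟩ := hP
  exact ⟨C, fun y hy => by rw [abs_neg]; exact hC y hy⟩

theorem dom_sub (hP : DomOn σ μ K P) (hQ : DomOn σ μ K Q) :
    DomOn σ μ K (fun y => P y - Q y) := by
  have := dom_add hP (dom_neg hQ)
  exact dom_congr (fun y _ => by ring) this

theorem dom_sum {ι : Type*} (s : Finset ι) (F : ι → (Fin n → ℝ) → ℝ)
    (hF : ∀ i ∈ s, DomOn σ μ K (F i)) :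
    DomOn σ μ K (fun y => ∑ i ∈ s, F i y) := by
  classical
  induction s using Finset.induction with
  | empty => exact ⟨0, fun y hy => by simp⟩
  | insert a s hnot ih =>
    have h1 := hF a (Finset.mem_insert_self a s)
    have h2 := ih (fun i hi => hF i (Finset.mem_insert_of_mem hi))
    have := dom_add h1 h2
    exact dom_congr (fun y _ => by rw [Finset.sum_insert hnot]) this

theorem dom_contmul {c : (Fin n → ℝ) → ℝ} (hc : ContinuousOn c U)
    (hK : IsCompact K) (hKU : K ⊆ U) (hP : DomOn σ μ K P) :
    DomOn σ μ K (fun y => c y * P y) := by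
  obtain ⟨C, hC⟩ := hP
  obtain ⟨B, hB⟩ := hK.exists_bound_of_continuousOn (hc.mono hKU)
  refine ⟨max B 0 * C, fun y hy => ?_⟩
  have h1 : |c y| ≤ max B 0 := le_trans (by simpa [Real.norm_eq_abs] using hB y hy) (le_max_left _ _)
  have h2 : |P y| ≤ C * Mnorm σ μ y := hC y hy
  have h3 : (0:ℝ) ≤ C * Mnorm σ μ y := le_trans (abs_nonneg _) h2
  calc |c y * P y| = |c y| * |P y| := abs_mul _ _
    _ ≤ max B 0 * (C * Mnorm σ μ y) :=
      mul_le_mul h1 h2 (abs_nonneg _) (le_max_right _ _)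
    _ = max B 0 * C * Mnorm σ μ y := by ring

end Dom
end DM


namespace DM
open PDkit
section DomChain
variable {n : ℕ} {U K : Set (Fin n → ℝ)}
  {Γ : (Fin n → ℝ) → Fin n → Fin n → Fin n → ℝ}
  {σ : (Fin n → ℝ) → Fin n → Fin n → ℝ} {μ : (Fin n → ℝ) → Fin n → ℝ}
  (hn : 2 ≤ n) (hU : IsOpen U)
  (hΓsm : ∀ a b c, ContDiffOn ℝ (⊤ : ℕ∞) (fun x => Γ x a b c) U)
  (hσsm : ∀ b c, ContDiffOn ℝ (⊤ : ℕ∞) (fun x => σ x b c) U)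
  (hμsm : ∀ a, ContDiffOn ℝ (⊤ : ℕ∞) (fun x => μ x a) U)
  (heq : ∀ x ∈ U, ∀ a b c, pd (fun y => σ y b c) a x = Ffun Γ σ μ a b c x)
  (hK : IsCompact K) (hKU : K ⊆ U)

include hK hKU

theorem dom_sigma (b c : Fin n) : DomOn σ μ K (fun y => σ y b c) := by
  simpa [compF] using dom_comp (σ := σ) (μ := μ) (K := K) (Sum.inl (b, c))

theorem dom_mu (c : Fin n) : DomOn σ μ K (fun y => μ y c) := by
  simpa [compF] using dom_comp (σ := σ) (μ := μ) (K := K) (Sum.inr (Sum.inl c))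

theorem dom_rho : DomOn σ μ K (rhofun μ) := by
  simpa [compF] using dom_comp (σ := σ) (μ := μ) (K := K) (Sum.inr (Sum.inr ()))

include hU hΓsm hσsm hμsm

theorem dom_F (a b c : Fin n) : DomOn σ μ K (Ffun Γ σ μ a b c) := by
  unfold Ffun
  apply dom_sub
  apply dom_sub
  apply dom_add
  · exact dom_contmul (U := U) continuousOn_const hK hKU (dom_mu hK hKU c)
  · exact dom_contmul (U := U) continuousOn_const hK hKU (dom_mu hK hKU b)
  · exact dom_sum _ _ fun d _ =>
      dom_contmul (hΓsm a b d).continuousOn hK hKU (dom_sigma hK hKU d c)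
  · exact dom_sum _ _ fun d _ =>
      dom_contmul (hΓsm a c d).continuousOn hK hKU (dom_sigma hK hKU b d)

include heq

theorem dom_pdsigma (a b c : Fin n) :
    DomOn σ μ K (fun y => pd (fun z => σ z b c) a y) :=
  dom_congr (fun y hy => heq y (hKU hy) a b c) (dom_F hU hΓsm hσsm hμsm hK hKU a b c)

omit heq

theorem dom_G (a b c e : Fin n) : DomOn σ μ K (Gfun Γ σ μ a b c e) := by
  unfold Gfun
  apply dom_sub
  apply dom_neg
  · exact dom_sum _ _ fun d _ => dom_add
      (dom_contmul (contDiffOn_pd hU (hΓsm a b d)).continuousOn hK hKU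
        (dom_sigma hK hKU d c))
      (dom_contmul (hΓsm a b d).continuousOn hK hKU
        (dom_F hU hΓsm hσsm hμsm hK hKU e d c))
  · exact dom_sum _ _ fun d _ => dom_add
      (dom_contmul (contDiffOn_pd hU (hΓsm a c d)).continuousOn hK hKU
        (dom_sigma hK hKU b d))
      (dom_contmul (hΓsm a c d).continuousOn hK hKU
        (dom_F hU hΓsm hσsm hμsm hK hKU e b d))

theorem dom_H (e c : Fin n) : DomOn σ μ K (Hfun Γ σ μ e c) := by
  unfold Hfun
  exact dom_contmul (U := U) continuousOn_const hK hKU (dom_sum _ _ fun a _ =>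
    dom_sub (dom_G hU hΓsm hσsm hμsm hK hKU e a c a)
      (dom_G hU hΓsm hσsm hμsm hK hKU a a c e))

include hn heq

theorem dom_pdmu (e c : Fin n) :
    DomOn σ μ K (fun y => pd (fun z => μ z c) e y) := by
  apply dom_congr (fun y hy => lem_L2 hn hU hΓsm hσsm hμsm heq (hKU hy) e c)
  exact dom_add (dom_contmul (U := U) continuousOn_const hK hKU (dom_rho hK hKU))
    (dom_H hU hΓsm hσsm hμsm hK hKU e c)

theorem dom_pdF (a b c e : Fin n) :
    DomOn σ μ K (fun y => pd (Ffun Γ σ μ a b c) e y) := by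
  apply dom_congr (fun y hy => lem_X hU hΓsm hσsm hμsm heq (hKU hy) a b c e)
  apply dom_add
  apply dom_add
  · exact dom_contmul (U := U) continuousOn_const hK hKU
      (dom_pdmu hn hU hΓsm hσsm hμsm heq hK hKU e c)
  · exact dom_contmul (U := U) continuousOn_const hK hKU
      (dom_pdmu hn hU hΓsm hσsm hμsm heq hK hKU e b)
  · exact dom_G hU hΓsm hσsm hμsm hK hKU a b c e

theorem dom_pdG (a b c e f : Fin n) :
    DomOn σ μ K (fun y => pd (Gfun Γ σ μ a b c e) f y) := by
  have dσ : ∀ y ∈ U, ∀ b c, DifferentiableAt ℝ (fun z => σ z b c) y :=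
    fun y hy b c => diffAt_of_contDiffOn hU (hσsm b c) hy
  have dΓ : ∀ y ∈ U, ∀ a b c, DifferentiableAt ℝ (fun z => Γ z a b c) y :=
    fun y hy a b c => diffAt_of_contDiffOn hU (hΓsm a b c) hy
  have dpdΓ : ∀ y ∈ U, ∀ a b c e, DifferentiableAt ℝ (fun z => pd (fun w => Γ w a b c) e z) y :=
    fun y hy a b c e => diffAt_of_contDiffOn hU (contDiffOn_pd hU (hΓsm a b c)) hy
  have dF : ∀ y ∈ U, ∀ a b c, DifferentiableAt ℝ (Ffun Γ σ μ a b c) y :=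
    fun y hy a b c => diffAt_of_contDiffOn hU (sm_F hU hΓsm hσsm hμsm a b c) hy
  have hid : ∀ y ∈ K, pd (Gfun Γ σ μ a b c e) f y
      = -(∑ d, (pd (fun z => pd (fun w => Γ w a b d) e z) f y * σ y d c
            + pd (fun w => Γ w a b d) e y * pd (fun z => σ z d c) f y
            + (pd (fun z => Γ z a b d) f y * Ffun Γ σ μ e d c y
              + Γ y a b d * pd (Ffun Γ σ μ e d c) f y)))
        - ∑ d, (pd (fun z => pd (fun w => Γ w a c d) e z) f y * σ y b d
            + pd (fun w => Γ w a c d) e y * pd (fun z => σ z b d) f y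
            + (pd (fun z => Γ z a c d) f y * Ffun Γ σ μ e b d y
              + Γ y a c d * pd (Ffun Γ σ μ e b d) f y)) := by
    intro y hy
    have hyU := hKU hy
    have dt1 : ∀ d : Fin n, DifferentiableAt ℝ
        (fun z => pd (fun w => Γ w a b d) e z * σ z d c + Γ z a b d * Ffun Γ σ μ e d c z) y :=
      fun d => ((dpdΓ y hyU a b d e).fun_mul (dσ y hyU d c)).fun_add
        ((dΓ y hyU a b d).fun_mul (dF y hyU e d c))
    have dt2 : ∀ d : Fin n, DifferentiableAt ℝ
        (fun z => pd (fun w => Γ w a c d) e z * σ z b d + Γ z a c d * Ffun Γ σ μ e b d z) y :=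
      fun d => ((dpdΓ y hyU a c d e).fun_mul (dσ y hyU b d)).fun_add
        ((dΓ y hyU a c d).fun_mul (dF y hyU e b d))
    show pd (fun z => -(∑ d, (pd (fun w => Γ w a b d) e z * σ z d c
        + Γ z a b d * Ffun Γ σ μ e d c z))
        - ∑ d, (pd (fun w => Γ w a c d) e z * σ z b d
          + Γ z a c d * Ffun Γ σ μ e b d z)) f y = _
    rw [pd_sub ((DifferentiableAt.fun_sum fun d _ => dt1 d).fun_neg)
        (DifferentiableAt.fun_sum fun d _ => dt2 d),
      pd_neg (DifferentiableAt.fun_sum fun d _ => dt1 d),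
      pd_sum _ _ (fun d _ => dt1 d), pd_sum _ _ (fun d _ => dt2 d)]
    have e1 : ∀ d : Fin n, pd (fun z => pd (fun w => Γ w a b d) e z * σ z d c
        + Γ z a b d * Ffun Γ σ μ e d c z) f y
        = pd (fun z => pd (fun w => Γ w a b d) e z) f y * σ y d c
          + pd (fun w => Γ w a b d) e y * pd (fun z => σ z d c) f y
          + (pd (fun z => Γ z a b d) f y * Ffun Γ σ μ e d c y
            + Γ y a b d * pd (Ffun Γ σ μ e d c) f y) := by
      intro d
      rw [pd_add ((dpdΓ y hyU a b d e).fun_mul (dσ y hyU d c))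
          ((dΓ y hyU a b d).fun_mul (dF y hyU e d c)),
        pd_mul (dpdΓ y hyU a b d e) (dσ y hyU d c),
        pd_mul (dΓ y hyU a b d) (dF y hyU e d c)]
    have e2 : ∀ d : Fin n, pd (fun z => pd (fun w => Γ w a c d) e z * σ z b d
        + Γ z a c d * Ffun Γ σ μ e b d z) f y
        = pd (fun z => pd (fun w => Γ w a c d) e z) f y * σ y b d
          + pd (fun w => Γ w a c d) e y * pd (fun z => σ z b d) f y
          + (pd (fun z => Γ z a c d) f y * Ffun Γ σ μ e b d y
            + Γ y a c d * pd (Ffun Γ σ μ e b d) f y) := by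
      intro d
      rw [pd_add ((dpdΓ y hyU a c d e).fun_mul (dσ y hyU b d))
          ((dΓ y hyU a c d).fun_mul (dF y hyU e b d)),
        pd_mul (dpdΓ y hyU a c d e) (dσ y hyU b d),
        pd_mul (dΓ y hyU a c d) (dF y hyU e b d)]
    rw [Finset.sum_congr rfl (fun d _ => e1 d), Finset.sum_congr rfl (fun d _ => e2 d)]
  apply dom_congr hid
  apply dom_sub
  apply dom_neg
  · refine dom_sum _ _ fun d _ => dom_add (dom_add ?_ ?_) (dom_add ?_ ?_)
    · exact dom_contmul (contDiffOn_pd hU (contDiffOn_pd hU (hΓsm a b d))).continuousOn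
        hK hKU (dom_sigma hK hKU d c)
    · exact dom_contmul (contDiffOn_pd hU (hΓsm a b d)).continuousOn hK hKU
        (dom_pdsigma hU hΓsm hσsm hμsm heq hK hKU f d c)
    · exact dom_contmul (contDiffOn_pd hU (hΓsm a b d)).continuousOn hK hKU
        (dom_F hU hΓsm hσsm hμsm hK hKU e d c)
    · exact dom_contmul (hΓsm a b d).continuousOn hK hKU
        (dom_pdF hn hU hΓsm hσsm hμsm heq hK hKU e d c f)
  · refine dom_sum _ _ fun d _ => dom_add (dom_add ?_ ?_) (dom_add ?_ ?_)
    · exact dom_contmul (contDiffOn_pd hU (contDiffOn_pd hU (hΓsm a c d))).continuousOn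
        hK hKU (dom_sigma hK hKU b d)
    · exact dom_contmul (contDiffOn_pd hU (hΓsm a c d)).continuousOn hK hKU
        (dom_pdsigma hU hΓsm hσsm hμsm heq hK hKU f b d)
    · exact dom_contmul (contDiffOn_pd hU (hΓsm a c d)).continuousOn hK hKU
        (dom_F hU hΓsm hσsm hμsm hK hKU e b d)
    · exact dom_contmul (hΓsm a c d).continuousOn hK hKU
        (dom_pdF hn hU hΓsm hσsm hμsm heq hK hKU e b d f)

theorem dom_pdH (e c f : Fin n) :
    DomOn σ μ K (fun y => pd (Hfun Γ σ μ e c) f y) := by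
  have dG : ∀ y ∈ U, ∀ a b c e, DifferentiableAt ℝ (Gfun Γ σ μ a b c e) y :=
    fun y hy a b c e => diffAt_of_contDiffOn hU (sm_G hU hΓsm hσsm hμsm a b c e) hy
  have hid : ∀ y ∈ K, pd (Hfun Γ σ μ e c) f y
      = (1 / (n:ℝ)) * ∑ a, (pd (Gfun Γ σ μ e a c a) f y - pd (Gfun Γ σ μ a a c e) f y) := by
    intro y hy
    have hyU := hKU hy
    show pd (fun z => (1 / (n:ℝ)) * ∑ a, (Gfun Γ σ μ e a c a z - Gfun Γ σ μ a a c e z)) f y = _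
    rw [pd_const_mul _ (DifferentiableAt.fun_sum fun a _ =>
        (dG y hyU e a c a).fun_sub (dG y hyU a a c e)),
      pd_sum _ _ (fun a _ => (dG y hyU e a c a).fun_sub (dG y hyU a a c e))]
    congr 1
    exact Finset.sum_congr rfl fun a _ => pd_sub (dG y hyU e a c a) (dG y hyU a a c e)
  apply dom_congr hid
  exact dom_contmul (U := U) continuousOn_const hK hKU (dom_sum _ _ fun a _ =>
    dom_sub (dom_pdG hn hU hΓsm hσsm hμsm heq hK hKU e a c a f)
      (dom_pdG hn hU hΓsm hσsm hμsm heq hK hKU a a c e f))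

theorem dom_pdrho (f : Fin n) :
    DomOn σ μ K (fun y => pd (rhofun μ) f y) := by
  apply dom_congr (fun y hy => lem_L3 hn hU hΓsm hσsm hμsm heq (hKU hy) f)
  exact dom_contmul (U := U) continuousOn_const hK hKU (dom_sum _ _ fun e _ =>
    dom_sub (dom_pdH hn hU hΓsm hσsm hμsm heq hK hKU f e e)
      (dom_pdH hn hU hΓsm hσsm hμsm heq hK hKU e e f))

theorem dom_pdcomp (k : (Fin n × Fin n) ⊕ (Fin n) ⊕ Unit) (a : Fin n) :
    DomOn σ μ K (fun y => pd (compF σ μ k) a y) := by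
  match k with
  | Sum.inl p => exact dom_pdsigma hU hΓsm hσsm hμsm heq hK hKU a p.1 p.2
  | Sum.inr (Sum.inl b) => exact dom_pdmu hn hU hΓsm hσsm hμsm heq hK hKU a b
  | Sum.inr (Sum.inr _) => exact dom_pdrho hn hU hΓsm hσsm hμsm heq hK hKU a

end DomChain
end DM


namespace DM
open PDkit

theorem vanish {n : ℕ} {U : Set (Fin n → ℝ)} (hU : IsOpen U) (hconn : IsPreconnected U)
    {ι : Type*} [Fintype ι] (f : ι → (Fin n → ℝ) → ℝ)
    (hdiff : ∀ i, ∀ x ∈ U, DifferentiableAt ℝ (f i) x)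
    (hbound : ∀ K : Set (Fin n → ℝ), IsCompact K → K ⊆ U → ∀ i a,
      ∃ C, ∀ y ∈ K, |pd (f i) a y| ≤ C * ‖fun j => f j y‖)
    {x₀ : Fin n → ℝ} (hx₀ : x₀ ∈ U) (hzero : ∀ i, f i x₀ = 0) :
    ∀ x ∈ U, ∀ i, f i x = 0 := by
  classical
  set Z : Set (Fin n → ℝ) := {x | x ∈ U ∧ ∀ i, f i x = 0} with hZ
  -- Z is open
  have hZopen : IsOpen Z := by
    rw [Metric.isOpen_iff]
    rintro x₁ ⟨hx₁U, hx₁z⟩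
    obtain ⟨ε, hε, hball⟩ := Metric.isOpen_iff.1 hU x₁ hx₁U
    refine ⟨ε/2, by positivity, ?_⟩
    have hKU : Metric.closedBall x₁ (ε/2) ⊆ U := fun y hy =>
      hball (lt_of_le_of_lt (Metric.mem_closedBall.1 hy) (by linarith))
    have hK : IsCompact (Metric.closedBall x₁ (ε/2)) := isCompact_closedBall _ _
    -- uniform constant
    have hCex : ∀ p : ι × Fin n, ∃ C, ∀ y ∈ Metric.closedBall x₁ (ε/2),
        |pd (f p.1) p.2 y| ≤ C * ‖fun j => f j y‖ :=
      fun p => hbound _ hK hKU p.1 p.2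
    choose C hC using hCex
    set C₀ : ℝ := ∑ q : ι × Fin n, |C q| with hC₀
    have hC₀le : ∀ p : ι × Fin n, C p ≤ C₀ := by
      intro p
      calc C p ≤ |C p| := le_abs_self _
        _ ≤ C₀ := Finset.single_le_sum (fun q _ => abs_nonneg (C q)) (Finset.mem_univ p)
    have hC₀0 : 0 ≤ C₀ := Finset.sum_nonneg fun q _ => abs_nonneg _
    -- show every point of the ball is in Z
    intro y hy
    have hyK : y ∈ Metric.closedBall x₁ (ε/2) := Metric.ball_subset_closedBall hy
    set v : Fin n → ℝ := y - x₁ with hv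
    set p : ℝ → (Fin n → ℝ) := fun t => x₁ + t • v with hp
    have hpt : ∀ t ∈ Set.Icc (0:ℝ) 1, p t ∈ Metric.closedBall x₁ (ε/2) := by
      intro t ht
      rw [Metric.mem_closedBall]
      have : dist (p t) x₁ = t * ‖v‖ := by
        rw [dist_eq_norm]
        simp [hp, norm_smul, abs_of_nonneg ht.1]
      rw [this]
      have hvnorm : ‖v‖ = dist y x₁ := by rw [dist_eq_norm]
      calc t * ‖v‖ ≤ 1 * ‖v‖ := by
            apply mul_le_mul_of_nonneg_right ht.2 (norm_nonneg _)
        _ = dist y x₁ := by rw [one_mul, hvnorm]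
        _ ≤ ε/2 := hyK
    set g : ℝ → (ι → ℝ) := fun t i => f i (p t) with hg
    set g' : ℝ → (ι → ℝ) := fun t i => fderiv ℝ (f i) (p t) v with hg'
    have hderiv : ∀ t ∈ Set.Icc (0:ℝ) 1, HasDerivAt g (g' t) t := by
      intro t ht
      rw [hasDerivAt_pi]
      intro i
      have hptU : p t ∈ U := hKU (hpt t ht)
      have hdp : HasDerivAt p v t := by
        have h1 : HasDerivAt (fun s : ℝ => s • v) ((1:ℝ) • v) t :=
          (hasDerivAt_id t).smul_const v
        simpa [hp] using h1.const_add x₁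
      exact ((hdiff i _ hptU).hasFDerivAt).comp_hasDerivAt t hdp
    have hcont : ContinuousOn g (Set.Icc 0 1) := fun t ht =>
      ((hderiv t ht).continuousAt).continuousWithinAt
    have happly : ∀ t ∈ Set.Icc (0:ℝ) 1, ∀ i,
        g' t i = ∑ a, v a * pd (f i) a (p t) := by
      intro t ht i
      have hvsum : v = ∑ a, v a • (Pi.single a 1 : Fin n → ℝ) := by
        conv_lhs => rw [pi_eq_sum_univ v]
        apply Finset.sum_congr rfl
        intro a _
        congr 1
        funext j
        simp [Pi.single_apply, eq_comm]
      show fderiv ℝ (f i) (p t) v = _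
      conv_lhs => rw [hvsum]
      rw [map_sum]
      apply Finset.sum_congr rfl
      intro a _
      rw [map_smul]
      simp [pd, smul_eq_mul]
    set Kc : ℝ := C₀ * ∑ a, |v a| with hKc
    have hKc0 : 0 ≤ Kc := mul_nonneg hC₀0 (Finset.sum_nonneg fun a _ => abs_nonneg _)
    have hbnd : ∀ t ∈ Set.Ico (0:ℝ) 1, ‖g' t‖ ≤ Kc * ‖g t‖ + 0 := by
      intro t ht
      rw [add_zero]
      have htI : t ∈ Set.Icc (0:ℝ) 1 := ⟨ht.1, le_of_lt ht.2⟩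
      rw [pi_norm_le_iff_of_nonneg (mul_nonneg hKc0 (norm_nonneg _))]
      intro i
      rw [Real.norm_eq_abs, happly t htI i]
      calc |∑ a, v a * pd (f i) a (p t)| ≤ ∑ a, |v a * pd (f i) a (p t)| :=
            Finset.abs_sum_le_sum_abs _ _
        _ ≤ ∑ a, |v a| * (C₀ * ‖g t‖) := by
            apply Finset.sum_le_sum
            intro a _
            rw [abs_mul]
            apply mul_le_mul_of_nonneg_left _ (abs_nonneg _)
            calc |pd (f i) a (p t)| ≤ C (i, a) * ‖fun j => f j (p t)‖ :=
                  hC (i, a) _ (hpt t htI)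
              _ ≤ C₀ * ‖g t‖ := by
                  apply mul_le_mul_of_nonneg_right (hC₀le (i, a)) (norm_nonneg _)
        _ = Kc * ‖g t‖ := by rw [← Finset.sum_mul, hKc]; ring
    have h0 : ‖g 0‖ ≤ 0 := by
      have : g 0 = fun i => f i x₁ := by
        funext i
        simp [hg, hp]
      rw [this]
      have : (fun i => f i x₁) = (0 : ι → ℝ) := funext fun i => hx₁z i
      rw [this, norm_zero]
    have := norm_le_gronwallBound_of_norm_deriv_right_le hcont
      (fun t ht => (hderiv t ⟨ht.1, le_of_lt ht.2⟩).hasDerivWithinAt) h0 hbnd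
    have h1 : ‖g 1‖ ≤ 0 := by
      have := this 1 (by norm_num)
      rwa [gronwallBound_ε0, zero_mul] at this
    have hg1 : g 1 = 0 := by
      have := norm_le_zero_iff.1 h1
      exact this
    constructor
    · exact hKU hyK
    · intro i
      have : g 1 i = 0 := by rw [hg1]; rfl
      simpa [hg, hp, hv] using this
  -- the "nonzero" set is open
  set B : Set (Fin n → ℝ) := {x | x ∈ U ∧ ∃ i, f i x ≠ 0} with hB
  have hBopen : IsOpen B := by
    rw [isOpen_iff_mem_nhds]
    rintro x ⟨hxU, i, hi⟩
    have hcont : ContinuousAt (f i) x := (hdiff i x hxU).continuousAt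
    have h1 : ∀ᶠ y in nhds x, f i y ≠ 0 := hcont.eventually_ne hi
    filter_upwards [h1, hU.mem_nhds hxU] with y hy1 hy2
    exact ⟨hy2, i, hy1⟩
  -- connectedness argument
  intro x hxU i
  by_contra hne
  have hcover : U ⊆ Z ∪ B := by
    intro z hz
    by_cases h : ∀ j, f j z = 0
    · exact Or.inl ⟨hz, h⟩
    · push_neg at h
      exact Or.inr ⟨hz, h⟩
  have hZne : (U ∩ Z).Nonempty := ⟨x₀, hx₀, hx₀, hzero⟩
  have hBne : (U ∩ B).Nonempty := ⟨x, hxU, hxU, i, hne⟩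
  obtain ⟨z, hzU, hzZ, hzB⟩ := hconn Z B hZopen hBopen hcover hZne hBne
  obtain ⟨j, hj⟩ := hzB.2
  exact hj (hzZ.2 j)

end DM



namespace DM
open PDkit
section Assemble
variable {n : ℕ} {U : Set (Fin n → ℝ)}
  {Γ : (Fin n → ℝ) → Fin n → Fin n → Fin n → ℝ}
  {σ σ₁ σ₂ : (Fin n → ℝ) → Fin n → Fin n → ℝ} {μ : (Fin n → ℝ) → Fin n → ℝ}
  {x : Fin n → ℝ}

theorem nablaSig_congr (hU : IsOpen U)
    (h : ∀ y ∈ U, ∀ b c, σ₁ y b c = σ₂ y b c) (hx : x ∈ U) (a b c : Fin n) :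
    nablaSig Γ σ₁ x a b c = nablaSig Γ σ₂ x a b c := by
  unfold nablaSig
  rw [pd_congr_open hU (fun y hy => h y hy b c) hx]
  congr 1
  · congr 1
    exact Finset.sum_congr rfl (fun d _ => by rw [h x hx d c])
  · exact Finset.sum_congr rfl (fun d _ => by rw [h x hx b d])

theorem nablaSig_add (hU : IsOpen U)
    (h1 : ∀ b c, ContDiffOn ℝ (⊤ : ℕ∞) (fun x => σ₁ x b c) U)
    (h2 : ∀ b c, ContDiffOn ℝ (⊤ : ℕ∞) (fun x => σ₂ x b c) U) (hx : x ∈ U) (a b c : Fin n) :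
    nablaSig Γ (fun y e f => σ₁ y e f + σ₂ y e f) x a b c
      = nablaSig Γ σ₁ x a b c + nablaSig Γ σ₂ x a b c := by
  unfold nablaSig
  rw [pd_add (diffAt_of_contDiffOn hU (h1 b c) hx) (diffAt_of_contDiffOn hU (h2 b c) hx)]
  simp only [mul_add, Finset.sum_add_distrib]
  ring

theorem nablaSig_smul (hU : IsOpen U) (r : ℝ)
    (h1 : ∀ b c, ContDiffOn ℝ (⊤ : ℕ∞) (fun x => σ₁ x b c) U) (hx : x ∈ U) (a b c : Fin n) :
    nablaSig Γ (fun y e f => r * σ₁ y e f) x a b c = r * nablaSig Γ σ₁ x a b c := by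
  unfold nablaSig
  rw [pd_const_mul _ (diffAt_of_contDiffOn hU (h1 b c) hx),
    Finset.sum_congr rfl (fun d (_ : d ∈ Finset.univ) =>
      show Γ x a b d * (r * σ₁ x d c) = r * (Γ x a b d * σ₁ x d c) by ring),
    Finset.sum_congr rfl (fun d (_ : d ∈ Finset.univ) =>
      show Γ x a c d * (r * σ₁ x b d) = r * (Γ x a c d * σ₁ x b d) by ring),
    ← Finset.mul_sum, ← Finset.mul_sum]
  ring

theorem nablaSig_zero (a b c : Fin n) :
    nablaSig Γ (fun _ _ _ => (0:ℝ)) x a b c = 0 := by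
  unfold nablaSig
  rw [show (fun y : Fin n → ℝ => (0:ℝ)) = (fun _ => (0:ℝ)) from rfl, pd_const]
  simp

theorem heq_of_met
    (hmet : ∀ x ∈ U, ∀ a b c, nablaSig Γ σ x a b c = kron a b * μ x c + kron a c * μ x b) :
    ∀ x ∈ U, ∀ a b c, pd (fun y => σ y b c) a x = Ffun Γ σ μ a b c x := by
  intro x hx a b c
  have h := hmet x hx a b c
  unfold nablaSig at h
  unfold Ffun
  linarith

theorem mu_det (hn : 2 ≤ n)
    (hmet : ∀ x ∈ U, ∀ a b c, nablaSig Γ σ x a b c = kron a b * μ x c + kron a c * μ x b)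
    (hx : x ∈ U) (c : Fin n) :
    μ x c = (1/((n:ℝ)+1)) * ∑ b, nablaSig Γ σ x b b c := by
  have h : ∑ b, nablaSig Γ σ x b b c
      = ∑ b, (kron b b * μ x c + kron b c * μ x b) :=
    Finset.sum_congr rfl fun b _ => hmet x hx b b c
  have h2 : ∑ b, (kron b b * μ x c + kron b c * μ x b)
      = (n:ℝ) * μ x c + μ x c := by
    rw [Finset.sum_add_distrib]
    congr 1
    · simp [kron, mul_comm]
    · simp [kron, Finset.sum_ite_eq]
  rw [h, h2]
  have hne : ((n:ℝ) + 1) ≠ 0 := by positivity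
  field_simp

end Assemble
end DM


namespace DM
open PDkit
section Phi
variable {n : ℕ} (U : Set (Fin n → ℝ)) (Γ : (Fin n → ℝ) → Fin n → Fin n → Fin n → ℝ)

open Classical in
noncomputable def extS (s : ↥U → Fin n → Fin n → ℝ) : (Fin n → ℝ) → Fin n → Fin n → ℝ :=
  fun x => if h : x ∈ U then s ⟨x, h⟩ else 0

noncomputable def muS (s : ↥U → Fin n → Fin n → ℝ) : (Fin n → ℝ) → Fin n → ℝ :=
  fun x c => (1/((n:ℝ)+1)) * ∑ b, nablaSig Γ (extS U s) x b b c

noncomputable def rhoS (x₀ : Fin n → ℝ) (s : ↥U → Fin n → Fin n → ℝ) : ℝ :=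
  (1/(n:ℝ)) * ∑ a, pd (fun y => muS U Γ s y a) a x₀

noncomputable def PhiFun (x₀ : Fin n → ℝ) (hx₀ : x₀ ∈ U)
    (s : ↥U → Fin n → Fin n → ℝ) :
    (({p : Fin n × Fin n // p.1 ≤ p.2}) ⊕ (Fin n) ⊕ Unit) → ℝ
  | Sum.inl p => s ⟨x₀, hx₀⟩ p.1.1 p.1.2
  | Sum.inr (Sum.inl c) => muS U Γ s x₀ c
  | Sum.inr (Sum.inr _) => rhoS U Γ x₀ s

variable {U Γ}
variable {σ : (Fin n → ℝ) → Fin n → Fin n → ℝ} {μ : (Fin n → ℝ) → Fin n → ℝ}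
  {s : ↥U → Fin n → Fin n → ℝ}

theorem muS_eq (hn : 2 ≤ n) (hU : IsOpen U)
    (hmet : ∀ x ∈ U, ∀ a b c, nablaSig Γ σ x a b c = kron a b * μ x c + kron a c * μ x b)
    (hval : ∀ x : ↥U, s x = σ ↑x) :
    ∀ x ∈ U, ∀ c, muS U Γ s x c = μ x c := by
  intro x hx c
  have h1 : ∀ y ∈ U, ∀ b c', extS U s y b c' = σ y b c' := by
    intro y hy b c'
    unfold extS
    classical
    rw [dif_pos hy, hval ⟨y, hy⟩]
  unfold muS
  rw [Finset.sum_congr rfl fun b (_ : b ∈ Finset.univ) => nablaSig_congr hU h1 hx b b c]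
  exact (mu_det hn hmet hx c).symm

theorem rhoS_eq (hn : 2 ≤ n) (hU : IsOpen U)
    (hmet : ∀ x ∈ U, ∀ a b c, nablaSig Γ σ x a b c = kron a b * μ x c + kron a c * μ x b)
    (hval : ∀ x : ↥U, s x = σ ↑x) {x₀ : Fin n → ℝ} (hx₀ : x₀ ∈ U) :
    rhoS U Γ x₀ s = rhofun μ x₀ := by
  unfold rhoS rhofun
  congr 1
  exact Finset.sum_congr rfl fun a (_ : a ∈ Finset.univ) =>
    pd_congr_open hU (fun y hy => muS_eq hn hU hmet hval y hy a) hx₀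

theorem rhofun_add (hU : IsOpen U) {μ₁ μ₂ : (Fin n → ℝ) → Fin n → ℝ}
    (h1 : ∀ a, ContDiffOn ℝ (⊤ : ℕ∞) (fun x => μ₁ x a) U)
    (h2 : ∀ a, ContDiffOn ℝ (⊤ : ℕ∞) (fun x => μ₂ x a) U) {x₀ : Fin n → ℝ} (hx₀ : x₀ ∈ U) :
    rhofun (fun y c => μ₁ y c + μ₂ y c) x₀ = rhofun μ₁ x₀ + rhofun μ₂ x₀ := by
  unfold rhofun
  rw [Finset.sum_congr rfl fun a (_ : a ∈ Finset.univ) =>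
    pd_add (diffAt_of_contDiffOn hU (h1 a) hx₀) (diffAt_of_contDiffOn hU (h2 a) hx₀),
    Finset.sum_add_distrib]
  ring

theorem rhofun_smul (hU : IsOpen U) (r : ℝ) {μ₁ : (Fin n → ℝ) → Fin n → ℝ}
    (h1 : ∀ a, ContDiffOn ℝ (⊤ : ℕ∞) (fun x => μ₁ x a) U) {x₀ : Fin n → ℝ} (hx₀ : x₀ ∈ U) :
    rhofun (fun y c => r * μ₁ y c) x₀ = r * rhofun μ₁ x₀ := by
  unfold rhofun
  rw [Finset.sum_congr rfl fun a (_ : a ∈ Finset.univ) =>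
    pd_const_mul r (diffAt_of_contDiffOn hU (h1 a) hx₀), ← Finset.mul_sum]
  ring

end Phi
end DM


open PDkit DM

theorem card_aux (n : ℕ) (hn : 2 ≤ n) :
    Fintype.card (({p : Fin n × Fin n // p.1 ≤ p.2}) ⊕ (Fin n) ⊕ Unit)
      ≤ (n + 1) * (n + 2) / 2 := by
  have e : {p : Fin n × Fin n // p.1 ≤ p.2} ≃ (Σ j : Fin n, Fin (j.1 + 1)) :=
    { toFun := fun p => ⟨p.1.2, ⟨p.1.1.1, by
        have := p.2
        rw [Fin.le_def] at this
        omega⟩⟩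
      invFun := fun q => ⟨(⟨q.2.1, by have h1 := q.1.isLt; have h2 := q.2.isLt; omega⟩, q.1),
        by rw [Fin.le_def]; have := q.2.isLt; simp; omega⟩
      left_inv := fun p => by
        obtain ⟨⟨a, b⟩, h⟩ := p
        simp
      right_inv := fun q => by
        obtain ⟨j, k⟩ := q
        simp }
  have hcard1 : Fintype.card {p : Fin n × Fin n // p.1 ≤ p.2}
      = ∑ j ∈ Finset.range n, (j + 1) := by
    rw [Fintype.card_congr e, Fintype.card_sigma]
    simp only [Fintype.card_fin]
    exact Fin.sum_univ_eq_sum_range (fun j => j + 1) n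
  have hgauss : (∑ i ∈ Finset.range n, i) * 2 = n * (n - 1) :=
    Finset.sum_range_id_mul_two n
  have hsum : ∑ j ∈ Finset.range n, (j + 1) = (∑ i ∈ Finset.range n, i) + n := by
    rw [Finset.sum_add_distrib]
    simp
  rw [Fintype.card_sum, Fintype.card_sum, Fintype.card_fin, Fintype.card_unit, hcard1, hsum]
  set S := ∑ i ∈ Finset.range n, i with hS
  obtain ⟨m, rfl⟩ : ∃ m, n = m + 2 := ⟨n - 2, by omega⟩
  rw [Nat.le_div_iff_mul_le (by norm_num)]
  have h1 : (m + 2) * (m + 2 - 1) = m * m + 3 * m + 2 := by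
    rw [show m + 2 - 1 = m + 1 from rfl]; ring
  have h2 : (m + 2 + 1) * (m + 2 + 2) = m * m + 7 * m + 12 := by ring
  rw [h1] at hgauss
  rw [h2]
  set q := m * m with hq
  omega


set_option maxHeartbeats 1000000 in
/-- for a special torsion-free affine connection on a connected
open set `U ⊆ ℝⁿ`, the space of smooth solutions of the metrisability equation
(solutions being identified when they agree on `U`) is a vector space of
dimension at most `(n+1)(n+2)/2`. -/
theorem degree_of_mobility_bound
    {n : ℕ} (hn : 2 ≤ n) (U : Set (Fin n → ℝ)) (hU : IsOpen U)
    (hUconn : IsConnected U)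
    (Γ : (Fin n → ℝ) → Fin n → Fin n → Fin n → ℝ)
    (hΓtf : ∀ x a b c, Γ x a b c = Γ x c b a)
    (hΓsm : ∀ a b c, ContDiffOn ℝ (⊤ : ℕ∞) (fun x => Γ x a b c) U)
    (e : (Fin n → ℝ) → ℝ) (hesm : ContDiffOn ℝ (⊤ : ℕ∞) e U)
    (hepos : ∀ x ∈ U, 0 < e x)
    (hspecial : ∀ x ∈ U, ∀ a, pd e a x = (∑ b, Γ x a b b) * e x) :
    ∃ T : Submodule ℝ (↥U → Fin n → Fin n → ℝ),
      (↑T = {s : ↥U → Fin n → Fin n → ℝ |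
        ∃ σ : (Fin n → ℝ) → Fin n → Fin n → ℝ,
          (∀ b c, ContDiffOn ℝ (⊤ : ℕ∞) (fun x => σ x b c) U) ∧
          (∀ x b c, σ x b c = σ x c b) ∧
          (∃ μ : (Fin n → ℝ) → Fin n → ℝ,
            (∀ a, ContDiffOn ℝ (⊤ : ℕ∞) (fun x => μ x a) U) ∧
            ∀ x ∈ U, ∀ a b c,
              nablaSig Γ σ x a b c = kron a b * μ x c + kron a c * μ x b) ∧
          (∀ x : ↥U, s x = σ ↑x)}) ∧
      Module.rank ℝ ↥T ≤ (((n + 1) * (n + 2) / 2 : ℕ) : Cardinal) := by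
  classical
  obtain ⟨x₀, hx₀⟩ := hUconn.nonempty
  have hpre : IsPreconnected U := hUconn.isPreconnected
  -- the solution set
  set S : Set (↥U → Fin n → Fin n → ℝ) := {s : ↥U → Fin n → Fin n → ℝ |
        ∃ σ : (Fin n → ℝ) → Fin n → Fin n → ℝ,
          (∀ b c, ContDiffOn ℝ (⊤ : ℕ∞) (fun x => σ x b c) U) ∧
          (∀ x b c, σ x b c = σ x c b) ∧
          (∃ μ : (Fin n → ℝ) → Fin n → ℝ,
            (∀ a, ContDiffOn ℝ (⊤ : ℕ∞) (fun x => μ x a) U) ∧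
            ∀ x ∈ U, ∀ a b c,
              nablaSig Γ σ x a b c = kron a b * μ x c + kron a c * μ x b) ∧
          (∀ x : ↥U, s x = σ ↑x)} with hSdef
  have zero_mem : (0 : ↥U → Fin n → Fin n → ℝ) ∈ S := by
    refine ⟨fun _ _ _ => 0, fun b c => contDiffOn_const, fun _ _ _ => rfl,
      ⟨fun _ _ => 0, fun a => contDiffOn_const, ?_⟩, fun x => rfl⟩
    intro x _ a b c
    rw [nablaSig_zero]
    simp
  have add_mem : ∀ s t : ↥U → Fin n → Fin n → ℝ, s ∈ S → t ∈ S → s + t ∈ S := by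
    rintro s t ⟨σs, hσs, hsym_s, ⟨μs, hμs, hmet_s⟩, hval_s⟩
      ⟨σt, hσt, hsym_t, ⟨μt, hμt, hmet_t⟩, hval_t⟩
    refine ⟨fun y b c => σs y b c + σt y b c,
      fun b c => (hσs b c).add (hσt b c),
      fun y b c => show σs y b c + σt y b c = σs y c b + σt y c b by rw [hsym_s, hsym_t],
      ⟨fun y c => μs y c + μt y c, fun a => (hμs a).add (hμt a), ?_⟩, ?_⟩
    · intro x hx a b c
      rw [nablaSig_add hU hσs hσt hx a b c, hmet_s x hx a b c, hmet_t x hx a b c]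
      ring
    · intro x
      funext b c
      have h1 := congrFun (congrFun (hval_s x) b) c
      have h2 := congrFun (congrFun (hval_t x) b) c
      simp [h1, h2]
  have smul_mem : ∀ (r : ℝ) (s : ↥U → Fin n → Fin n → ℝ), s ∈ S → r • s ∈ S := by
    rintro r s ⟨σs, hσs, hsym_s, ⟨μs, hμs, hmet_s⟩, hval_s⟩
    refine ⟨fun y b c => r * σs y b c,
      fun b c => contDiffOn_const.mul (hσs b c),
      fun y b c => show r * σs y b c = r * σs y c b by rw [hsym_s],
      ⟨fun y c => r * μs y c, fun a => contDiffOn_const.mul (hμs a), ?_⟩, ?_⟩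
    · intro x hx a b c
      rw [nablaSig_smul hU r hσs hx a b c, hmet_s x hx a b c]
      ring
    · intro x
      funext b c
      have h1 := congrFun (congrFun (hval_s x) b) c
      simp [h1]
  set T : Submodule ℝ (↥U → Fin n → Fin n → ℝ) :=
    { carrier := S
      add_mem' := fun {s} {t} hs ht => add_mem s t hs ht
      zero_mem' := zero_mem
      smul_mem' := fun r s hs => smul_mem r s hs } with hTdef
  refine ⟨T, rfl, ?_⟩
  -- the linear evaluation map
  have hmemS : ∀ s : ↥T, (s : ↥U → Fin n → Fin n → ℝ) ∈ S := fun s => s.2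
  set Φ : ↥T →ₗ[ℝ] ((({p : Fin n × Fin n // p.1 ≤ p.2}) ⊕ (Fin n) ⊕ Unit) → ℝ) :=
    { toFun := fun s => PhiFun U Γ x₀ hx₀ (s : ↥U → Fin n → Fin n → ℝ)
      map_add' := by
        intro s t
        obtain ⟨σs, hσs, hsym_s, ⟨μs, hμs, hmet_s⟩, hval_s⟩ := hmemS s
        obtain ⟨σt, hσt, hsym_t, ⟨μt, hμt, hmet_t⟩, hval_t⟩ := hmemS t
        have hmet_sum : ∀ x ∈ U, ∀ a b c,
            nablaSig Γ (fun y e f => σs y e f + σt y e f) x a b c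
              = kron a b * (μs x c + μt x c) + kron a c * (μs x b + μt x b) := by
          intro x hx a b c
          rw [nablaSig_add hU hσs hσt hx a b c, hmet_s x hx a b c, hmet_t x hx a b c]
          ring
        have hval_sum : ∀ x : ↥U, ((s : ↥U → Fin n → Fin n → ℝ) + t) x
            = (fun y e f => σs y e f + σt y e f) ↑x := by
          intro x
          funext e f
          have h1 := congrFun (congrFun (hval_s x) e) f
          have h2 := congrFun (congrFun (hval_t x) e) f
          simp [h1, h2]
        funext k
        match k with
        | Sum.inl p => simp [PhiFun]
        | Sum.inr (Sum.inl c) =>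
          show muS U Γ ((s : ↥U → Fin n → Fin n → ℝ) + t) x₀ c = _
          rw [muS_eq hn hU hmet_sum hval_sum x₀ hx₀ c]
          have e1 := muS_eq hn hU hmet_s hval_s x₀ hx₀ c
          have e2 := muS_eq hn hU hmet_t hval_t x₀ hx₀ c
          simp [PhiFun, e1, e2]
        | Sum.inr (Sum.inr u) =>
          show rhoS U Γ x₀ ((s : ↥U → Fin n → Fin n → ℝ) + t) = _
          rw [rhoS_eq hn hU hmet_sum hval_sum hx₀,
            rhofun_add hU hμs hμt hx₀]
          have e1 := rhoS_eq hn hU hmet_s hval_s hx₀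
          have e2 := rhoS_eq hn hU hmet_t hval_t hx₀
          simp [PhiFun, e1, e2]
      map_smul' := by
        intro r s
        obtain ⟨σs, hσs, hsym_s, ⟨μs, hμs, hmet_s⟩, hval_s⟩ := hmemS s
        have hmet_sm : ∀ x ∈ U, ∀ a b c,
            nablaSig Γ (fun y e f => r * σs y e f) x a b c
              = kron a b * (r * μs x c) + kron a c * (r * μs x b) := by
          intro x hx a b c
          rw [nablaSig_smul hU r hσs hx a b c, hmet_s x hx a b c]
          ring
        have hval_sm : ∀ x : ↥U, (r • (s : ↥U → Fin n → Fin n → ℝ)) x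
            = (fun y e f => r * σs y e f) ↑x := by
          intro x
          funext e f
          have h1 := congrFun (congrFun (hval_s x) e) f
          simp [h1]
        funext k
        match k with
        | Sum.inl p => simp [PhiFun]
        | Sum.inr (Sum.inl c) =>
          show muS U Γ (r • (s : ↥U → Fin n → Fin n → ℝ)) x₀ c = _
          rw [muS_eq hn hU hmet_sm hval_sm x₀ hx₀ c]
          have e1 := muS_eq hn hU hmet_s hval_s x₀ hx₀ c
          simp [PhiFun, e1]
        | Sum.inr (Sum.inr u) =>
          show rhoS U Γ x₀ (r • (s : ↥U → Fin n → Fin n → ℝ)) = _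
          rw [rhoS_eq hn hU hmet_sm hval_sm hx₀,
            rhofun_smul hU r hμs hx₀]
          have e1 := rhoS_eq hn hU hmet_s hval_s hx₀
          simp [PhiFun, e1] } with hΦdef
  -- injectivity
  have hker : ∀ s : ↥T, Φ s = 0 → s = 0 := by
    intro s hs0
    obtain ⟨σ, hσsm, hsym, ⟨μ, hμsm, hmet⟩, hval⟩ := hmemS s
    have heqF := heq_of_met hmet
    have hσ0 : ∀ b c, σ x₀ b c = 0 := by
      have hle : ∀ b c, b ≤ c → σ x₀ b c = 0 := by
        intro b c hbc
        have h1 := congrFun hs0 (Sum.inl ⟨(b, c), hbc⟩)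
        have h2 : (s : ↥U → Fin n → Fin n → ℝ) ⟨x₀, hx₀⟩ b c = 0 := h1
        have h3 := congrFun (congrFun (hval ⟨x₀, hx₀⟩) b) c
        rw [← h3]
        exact h2
      intro b c
      rcases le_total b c with h | h
      · exact hle b c h
      · rw [hsym]; exact hle c b h
    have hμ0 : ∀ c, μ x₀ c = 0 := by
      intro c
      have h1 := congrFun hs0 (Sum.inr (Sum.inl c))
      have h2 : muS U Γ (s : ↥U → Fin n → Fin n → ℝ) x₀ c = 0 := h1
      rw [muS_eq hn hU hmet hval x₀ hx₀ c] at h2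
      exact h2
    have hρ0 : rhofun μ x₀ = 0 := by
      have h1 := congrFun hs0 (Sum.inr (Sum.inr ()))
      have h2 : rhoS U Γ x₀ (s : ↥U → Fin n → Fin n → ℝ) = 0 := h1
      rw [rhoS_eq hn hU hmet hval hx₀] at h2
      exact h2
    have hvanish := vanish hU hpre (compF σ μ)
      (by
        intro i x hx
        match i with
        | Sum.inl p => exact diffAt_of_contDiffOn hU (hσsm p.1 p.2) hx
        | Sum.inr (Sum.inl b) => exact diffAt_of_contDiffOn hU (hμsm b) hx
        | Sum.inr (Sum.inr _) => exact diffAt_of_contDiffOn hU (sm_rho hU hμsm) hx)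
      (by
        intro K hK hKU i a
        have := dom_pdcomp hn hU hΓsm hσsm hμsm heqF hK hKU i a
        obtain ⟨C, hC⟩ := this
        exact ⟨C, fun y hy => hC y hy⟩)
      hx₀
      (by
        intro i
        match i with
        | Sum.inl p => exact hσ0 p.1 p.2
        | Sum.inr (Sum.inl b) => exact hμ0 b
        | Sum.inr (Sum.inr _) => exact hρ0)
    apply Subtype.ext
    funext x
    rw [hval x]
    funext b c
    exact hvanish ↑x x.2 (Sum.inl (b, c))
  have hinj : Function.Injective Φ := LinearMap.ker_eq_bot.1 (LinearMap.ker_eq_bot'.2 hker)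
  calc Module.rank ℝ ↥T
      ≤ Module.rank ℝ ((({p : Fin n × Fin n // p.1 ≤ p.2}) ⊕ (Fin n) ⊕ Unit) → ℝ) :=
        Φ.rank_le_of_injective hinj
    _ = (Fintype.card (({p : Fin n × Fin n // p.1 ≤ p.2}) ⊕ (Fin n) ⊕ Unit) : Cardinal) :=
        rank_fun'
    _ ≤ (((n + 1) * (n + 2) / 2 : ℕ) : Cardinal) := by
        exact_mod_cast Nat.cast_le.mpr (card_aux n hn)
end

section
/- Let Γ be a special torsion-free affine connection on U and suppose smooth fields (σ, μ, ρ) satisfy the closed prolongation system: ∇_a σ^{bc} = δ_a{}^b μ^c + δ_a{}^c μ^b, ∇_a μ^b = δ_a{}^b ρ − P_{ac} σ^{bc} + (1/n) W_{ac}{}^b{}_d σ^{cd}, ∇_a ρ = −2 P_{ab} μ^b + (4/n) Y_{abc} σ^{bc}. Then at every point of U and for all indices a, b, the trace-adjusted integrability condition holds: there exists a tensor A_b{}^d (namely A_b{}^d = −(1/n) W_{be}{}^d{}_f σ^{ef}) such that W_{ab}{}^c{}_e σ^{de} + W_{ab}{}^d{}_e σ^{ce} = δ_a{}^c A_b{}^d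 + δ_a{}^d A_b{}^c − δ_b{}^c A_a{}^d − δ_b{}^d A_a{}^c; that is, the trace-free part of W_{ab}{}^c{}_e σ^{de} + W_{ab}{}^d{}_e σ^{ce} vanishes. -/
open scoped BigOperators

namespace PInt

variable {n : ℕ} {x : Fin n → ℝ}

lemma pd_congr {f g : (Fin n → ℝ) → ℝ} (h : f =ᶠ[nhds x] g) (a : Fin n) :
    pd f a x = pd g a x := by
  unfold pd; rw [h.fderiv_eq]

lemma pd_add {f g : (Fin n → ℝ) → ℝ} (hf : DifferentiableAt ℝ f x)
    (hg : DifferentiableAt ℝ g x) (a : Fin n) :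
    pd (fun y => f y + g y) a x = pd f a x + pd g a x := by
  simp [pd, fderiv_fun_add hf hg]

lemma pd_mul {f g : (Fin n → ℝ) → ℝ} (hf : DifferentiableAt ℝ f x)
    (hg : DifferentiableAt ℝ g x) (a : Fin n) :
    pd (fun y => f y * g y) a x = pd f a x * g x + f x * pd g a x := by
  simp [pd, fderiv_fun_mul hf hg]; ring

lemma pd_const_mul {f : (Fin n → ℝ) → ℝ} (hf : DifferentiableAt ℝ f x) (c : ℝ) (a : Fin n) :
    pd (fun y => c * f y) a x = c * pd f a x := by
  simp [pd, fderiv_const_mul hf c]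

lemma pd_add3 {f g h : (Fin n → ℝ) → ℝ} (hf : DifferentiableAt ℝ f x)
    (hg : DifferentiableAt ℝ g x) (hh : DifferentiableAt ℝ h x) (a : Fin n) :
    pd (fun y => f y + g y + h y) a x = pd f a x + pd g a x + pd h a x := by
  simp only [pd]; rw [fderiv_fun_add ((hf.fun_add hg)) hh, fderiv_fun_add hf hg]; rfl

lemma pd_sum {ι : Type*} {s : Finset ι} {F : ι → (Fin n → ℝ) → ℝ}
    (h : ∀ i ∈ s, DifferentiableAt ℝ (F i) x) (a : Fin n) :
    pd (fun y => ∑ i ∈ s, F i y) a x = ∑ i ∈ s, pd (F i) a x := by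
  simp [pd, fderiv_fun_sum h]

lemma pd_diffAt {f : (Fin n → ℝ) → ℝ} (hf : ContDiffAt ℝ (⊤ : ℕ∞) f x) (b : Fin n) :
    DifferentiableAt ℝ (fun y => pd f b y) x := by
  have hd : DifferentiableAt ℝ (fderiv ℝ f) x :=
    (hf.fderiv_right (m := 1) (by exact WithTop.coe_le_coe.mpr (le_top : ((1 + 1 : ℕ) : ℕ∞) ≤ ⊤))).differentiableAt one_ne_zero
  exact hd.clm_apply (differentiableAt_const _)

lemma pd_comm {f : (Fin n → ℝ) → ℝ} (hf : ContDiffAt ℝ (⊤ : ℕ∞) f x) (a b : Fin n) :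
    pd (fun y => pd f b y) a x = pd (fun y => pd f a y) b x := by
  have hd : DifferentiableAt ℝ (fderiv ℝ f) x :=
    (hf.fderiv_right (m := 1) (by exact WithTop.coe_le_coe.mpr (le_top : ((1 + 1 : ℕ) : ℕ∞) ≤ ⊤))).differentiableAt one_ne_zero
  have hsymm := hf.isSymmSndFDerivAt (by rw [minSmoothness_of_isRCLikeNormedField]; exact WithTop.coe_le_coe.mpr (le_top : (2 : ℕ∞) ≤ ⊤))
  unfold pd
  rw [fderiv_clm_apply hd (differentiableAt_const _),
    fderiv_clm_apply hd (differentiableAt_const _)]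
  simp [hsymm (Pi.single a 1) (Pi.single b 1)]

lemma sum_kron_left (f : Fin n → ℝ) (b : Fin n) : ∑ e, kron b e * f e = f b := by
  simp [kron, ite_mul]

lemma sum_swap' (F G : Fin n → Fin n → ℝ) (h : ∀ e f, F e f = G f e) :
    ∑ e, ∑ f, F e f = ∑ e, ∑ f, G e f := by
  rw [Finset.sum_comm]
  exact Finset.sum_congr rfl fun e _ => Finset.sum_congr rfl fun f _ => h f e

theorem RI {n : ℕ} (U : Set (Fin n → ℝ)) (hU : IsOpen U)
    (Γ : (Fin n → ℝ) → Fin n → Fin n → Fin n → ℝ)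
    (hΓsm : ∀ a b c, ContDiffOn ℝ (⊤ : ℕ∞) (fun x => Γ x a b c) U)
    (σ : (Fin n → ℝ) → Fin n → Fin n → ℝ)
    (hσsm : ∀ b c, ContDiffOn ℝ (⊤ : ℕ∞) (fun x => σ x b c) U)
    {x : Fin n → ℝ} (hx : x ∈ U) (a b c d : Fin n) :
    (pd (fun y => nablaSig Γ σ y b c d) a x
        + ∑ e, Γ x a c e * nablaSig Γ σ x b e d
        + ∑ e, Γ x a d e * nablaSig Γ σ x b c e)
      - (pd (fun y => nablaSig Γ σ y a c d) b x
        + ∑ e, Γ x b c e * nablaSig Γ σ x a e d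
        + ∑ e, Γ x b d e * nablaSig Γ σ x a c e)
    = (∑ e, curv Γ x a b c e * σ x e d) + ∑ e, curv Γ x a b d e * σ x c e := by
  have hmem := hU.mem_nhds hx
  have cΓ : ∀ p q r, ContDiffAt ℝ (⊤ : ℕ∞) (fun y => Γ y p q r) x :=
    fun p q r => (hΓsm p q r).contDiffAt hmem
  have cσ : ∀ p q, ContDiffAt ℝ (⊤ : ℕ∞) (fun y => σ y p q) x :=
    fun p q => (hσsm p q).contDiffAt hmem
  have dΓ : ∀ p q r, DifferentiableAt ℝ (fun y => Γ y p q r) x :=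
    fun p q r => (cΓ p q r).differentiableAt (by simp)
  have dσ : ∀ p q, DifferentiableAt ℝ (fun y => σ y p q) x :=
    fun p q => (cσ p q).differentiableAt (by simp)
  have hpdT : ∀ p q r w : Fin n,
      pd (fun y => nablaSig Γ σ y q r w) p x
      = pd (fun y => pd (fun z => σ z r w) q y) p x
        + (∑ e, pd (fun y => Γ y q r e) p x * σ x e w
          + ∑ e, Γ x q r e * pd (fun y => σ y e w) p x)
        + (∑ e, pd (fun y => Γ y q w e) p x * σ x r e
          + ∑ e, Γ x q w e * pd (fun y => σ y r e) p x) := by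
    intro p q r w
    have h0 : pd (fun y => nablaSig Γ σ y q r w) p x
        = pd (fun y => pd (fun z => σ z r w) q y) p x
          + pd (fun y => ∑ e, Γ y q r e * σ y e w) p x
          + pd (fun y => ∑ e, Γ y q w e * σ y r e) p x := by
      simp only [nablaSig]
      exact pd_add3 (pd_diffAt (cσ r w) q)
        (DifferentiableAt.fun_sum fun e _ => (dΓ q r e).fun_mul (dσ e w))
        (DifferentiableAt.fun_sum fun e _ => (dΓ q w e).fun_mul (dσ r e)) p
    rw [h0, pd_sum (fun e _ => (dΓ q r e).fun_mul (dσ e w)),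
      pd_sum (fun e _ => (dΓ q w e).fun_mul (dσ r e)),
      Finset.sum_congr rfl (fun e _ => pd_mul (dΓ q r e) (dσ e w) p),
      Finset.sum_congr rfl (fun e _ => pd_mul (dΓ q w e) (dσ r e) p),
      Finset.sum_add_distrib, Finset.sum_add_distrib]
  have hlowA : ∀ p q r w : Fin n, ∑ e, Γ x p q e * nablaSig Γ σ x r e w
      = ∑ e, Γ x p q e * pd (fun y => σ y e w) r x
        + ∑ e, ∑ f, Γ x p q e * (Γ x r e f * σ x f w)
        + ∑ e, ∑ f, Γ x p q e * (Γ x r w f * σ x e f) := by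
    intro p q r w
    simp only [nablaSig, mul_add, Finset.mul_sum, Finset.sum_add_distrib]
  have hlowB : ∀ p q r w : Fin n, ∑ e, Γ x p q e * nablaSig Γ σ x r w e
      = ∑ e, Γ x p q e * pd (fun y => σ y w e) r x
        + ∑ e, ∑ f, Γ x p q e * (Γ x r w f * σ x f e)
        + ∑ e, ∑ f, Γ x p q e * (Γ x r e f * σ x w f) := by
    intro p q r w
    simp only [nablaSig, mul_add, Finset.mul_sum, Finset.sum_add_distrib]
  have hcurv1 : ∀ r w : Fin n, (∑ e, curv Γ x a b r e * σ x e w)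
      = ∑ e, pd (fun y => Γ y b r e) a x * σ x e w
        - ∑ e, pd (fun y => Γ y a r e) b x * σ x e w
        + ∑ e, ∑ f, Γ x a r f * (Γ x b f e * σ x e w)
        - ∑ e, ∑ f, Γ x b r f * (Γ x a f e * σ x e w) := by
    intro r w
    simp only [curv, sub_mul, add_mul, Finset.sum_mul, mul_assoc,
      Finset.sum_add_distrib, Finset.sum_sub_distrib]
  have hcurv2 : ∀ r w : Fin n, (∑ e, curv Γ x a b r e * σ x w e)
      = ∑ e, pd (fun y => Γ y b r e) a x * σ x w e
        - ∑ e, pd (fun y => Γ y a r e) b x * σ x w e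
        + ∑ e, ∑ f, Γ x a r f * (Γ x b f e * σ x w e)
        - ∑ e, ∑ f, Γ x b r f * (Γ x a f e * σ x w e) := by
    intro r w
    simp only [curv, sub_mul, add_mul, Finset.sum_mul, mul_assoc,
      Finset.sum_add_distrib, Finset.sum_sub_distrib]
  have hs1 : ∑ e, ∑ f, Γ x a c e * (Γ x b e f * σ x f d)
      = ∑ e, ∑ f, Γ x a c f * (Γ x b f e * σ x e d) := sum_swap' _ _ fun e f => rfl
  have hs2 : ∑ e, ∑ f, Γ x b c e * (Γ x a e f * σ x f d)
      = ∑ e, ∑ f, Γ x b c f * (Γ x a f e * σ x e d) := sum_swap' _ _ fun e f => rfl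
  have hs3 : ∑ e, ∑ f, Γ x a d e * (Γ x b e f * σ x c f)
      = ∑ e, ∑ f, Γ x a d f * (Γ x b f e * σ x c e) := sum_swap' _ _ fun e f => rfl
  have hs4 : ∑ e, ∑ f, Γ x b d e * (Γ x a e f * σ x c f)
      = ∑ e, ∑ f, Γ x b d f * (Γ x a f e * σ x c e) := sum_swap' _ _ fun e f => rfl
  have hs5 : ∑ e, ∑ f, Γ x a c e * (Γ x b d f * σ x e f)
      = ∑ e, ∑ f, Γ x b d e * (Γ x a c f * σ x f e) := sum_swap' _ _ fun e f => by ring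
  have hs6 : ∑ e, ∑ f, Γ x a d e * (Γ x b c f * σ x f e)
      = ∑ e, ∑ f, Γ x b c e * (Γ x a d f * σ x e f) := sum_swap' _ _ fun e f => by ring
  have hcl : pd (fun y => pd (fun z => σ z c d) b y) a x
      = pd (fun y => pd (fun z => σ z c d) a y) b x := pd_comm (cσ c d) a b
  rw [hpdT a b c d, hpdT b a c d, hlowA a c b d, hlowA b c a d,
    hlowB a d b c, hlowB b d a c, hcurv1 c d, hcurv2 d c]
  linear_combination hcl + hs1 - hs2 + hs3 - hs4 + hs5 + hs6

end PInt

/-- integrability condition for the prolonged system.  If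
`(σ, μ, ρ)` satisfies the closed prolongation system for a special connection,
then with `A_b{}^d = -(1/n) W_{be}{}^d{}_f σ^{ef}` the trace-adjusted
integrability condition holds, i.e. the trace-free part of
`W_{ab}{}^c{}_e σ^{de} + W_{ab}{}^d{}_e σ^{ce}` vanishes. -/
theorem prolongation_integrability_condition
    {n : ℕ} (hn : 2 ≤ n) (U : Set (Fin n → ℝ)) (hU : IsOpen U)
    (Γ : (Fin n → ℝ) → Fin n → Fin n → Fin n → ℝ)
    (hΓtf : ∀ x a b c, Γ x a b c = Γ x c b a)
    (hΓsm : ∀ a b c, ContDiffOn ℝ (⊤ : ℕ∞) (fun x => Γ x a b c) U)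
    (e : (Fin n → ℝ) → ℝ) (hesm : ContDiffOn ℝ (⊤ : ℕ∞) e U)
    (hepos : ∀ x ∈ U, 0 < e x)
    (hspecial : ∀ x ∈ U, ∀ a, pd e a x = (∑ b, Γ x a b b) * e x)
    (σ : (Fin n → ℝ) → Fin n → Fin n → ℝ)
    (hσsym : ∀ x b c, σ x b c = σ x c b)
    (hσsm : ∀ b c, ContDiffOn ℝ (⊤ : ℕ∞) (fun x => σ x b c) U)
    (μ : (Fin n → ℝ) → Fin n → ℝ)
    (hμsm : ∀ a, ContDiffOn ℝ (⊤ : ℕ∞) (fun x => μ x a) U)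
    (ρ : (Fin n → ℝ) → ℝ) (hρsm : ContDiffOn ℝ (⊤ : ℕ∞) ρ U)
    (heq1 : ∀ x ∈ U, ∀ a b c,
      nablaSig Γ σ x a b c = kron a b * μ x c + kron a c * μ x b)
    (heq2 : ∀ x ∈ U, ∀ a b,
      nablaVec Γ μ x a b
        = kron a b * ρ x - (∑ c, projP Γ x a c * σ x b c)
          + (1 / (n : ℝ)) * ∑ c, ∑ d, projW Γ x a c b d * σ x c d)
    (heq3 : ∀ x ∈ U, ∀ a,
      pd ρ a x = -2 * (∑ b, projP Γ x a b * μ x b)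
        + (4 / (n : ℝ)) * ∑ b, ∑ c, cottonY Γ x a b c * σ x b c) :
    ∀ x ∈ U, ∃ A : Fin n → Fin n → ℝ,
      (∀ b d, A b d = -(1 / (n : ℝ)) * ∑ e', ∑ f, projW Γ x b e' d f * σ x e' f) ∧
      ∀ a b c d,
        (∑ e', projW Γ x a b c e' * σ x d e')
            + (∑ e', projW Γ x a b d e' * σ x c e')
          = kron a c * A b d + kron a d * A b c
            - kron b c * A a d - kron b d * A a c := by
  intro x hx
  have hmem := hU.mem_nhds hx
  have cσ : ∀ p q, ContDiffAt ℝ (⊤ : ℕ∞) (fun y => σ y p q) x :=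
    fun p q => (hσsm p q).contDiffAt hmem
  have dμ : ∀ p, DifferentiableAt ℝ (fun y => μ y p) x :=
    fun p => ((hμsm p).contDiffAt hmem).differentiableAt (by simp)
  refine ⟨fun p q => -(1 / (n : ℝ)) * ∑ e', ∑ f, projW Γ x p e' q f * σ x e' f,
    fun p q => rfl, fun a b c d => ?_⟩
  have hRI := PInt.RI U hU Γ hΓsm σ hσsm hx a b c d
  have hE : ∀ p q r w : Fin n,
      pd (fun y => nablaSig Γ σ y q r w) p x
        + ∑ e', Γ x p r e' * nablaSig Γ σ x q e' w
        + ∑ e', Γ x p w e' * nablaSig Γ σ x q r e'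
      = kron q r * nablaVec Γ μ x p w + kron q w * nablaVec Γ μ x p r
        + Γ x p r q * μ x w + Γ x p w q * μ x r := by
    intro p q r w
    have h1 : pd (fun y => nablaSig Γ σ y q r w) p x
        = kron q r * pd (fun y => μ y w) p x + kron q w * pd (fun y => μ y r) p x := by
      have hev : (fun y => nablaSig Γ σ y q r w) =ᶠ[nhds x]
          (fun y => kron q r * μ y w + kron q w * μ y r) :=
        Filter.eventuallyEq_of_mem hmem (fun y hy => heq1 y hy q r w)
      rw [PInt.pd_congr hev p,
        PInt.pd_add ((differentiableAt_const _).fun_mul (dμ w))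
          ((differentiableAt_const _).fun_mul (dμ r)),
        PInt.pd_const_mul (dμ w), PInt.pd_const_mul (dμ r)]
    have h2 : ∑ e', Γ x p r e' * nablaSig Γ σ x q e' w
        = Γ x p r q * μ x w + kron q w * ∑ e', Γ x p r e' * μ x e' := by
      rw [Finset.sum_congr rfl (fun e' _ => by rw [heq1 x hx q e' w]),
        Finset.sum_congr rfl (fun e' _ =>
          show Γ x p r e' * (kron q e' * μ x w + kron q w * μ x e')
            = kron q e' * (Γ x p r e' * μ x w) + kron q w * (Γ x p r e' * μ x e')
          from by ring),
        Finset.sum_add_distrib, PInt.sum_kron_left, ← Finset.mul_sum]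
    have h3 : ∑ e', Γ x p w e' * nablaSig Γ σ x q r e'
        = kron q r * ∑ e', Γ x p w e' * μ x e' + Γ x p w q * μ x r := by
      rw [Finset.sum_congr rfl (fun e' _ => by rw [heq1 x hx q r e']),
        Finset.sum_congr rfl (fun e' _ =>
          show Γ x p w e' * (kron q r * μ x e' + kron q e' * μ x r)
            = kron q r * (Γ x p w e' * μ x e') + kron q e' * (Γ x p w e' * μ x r)
          from by ring),
        Finset.sum_add_distrib, PInt.sum_kron_left, ← Finset.mul_sum]
    rw [h1, h2, h3]
    simp only [nablaVec]
    ring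
  have t1 : Γ x a c b = Γ x b c a := hΓtf x a c b
  have t2 : Γ x a d b = Γ x b d a := hΓtf x a d b
  have hM : (∑ e', curv Γ x a b c e' * σ x e' d) + ∑ e', curv Γ x a b d e' * σ x c e'
      = kron b c * nablaVec Γ μ x a d + kron b d * nablaVec Γ μ x a c
        - kron a c * nablaVec Γ μ x b d - kron a d * nablaVec Γ μ x b c := by
    have h1 := hE a b c d
    have h2 := hE b a c d
    linear_combination h1 - h2 - hRI + μ x d * t1 + μ x c * t2
  have hc1 : ∑ e', curv Γ x a b c e' * σ x e' d
      = ∑ e', projW Γ x a b c e' * σ x d e'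
        + kron a c * ∑ e', projP Γ x b e' * σ x d e'
        - kron b c * ∑ e', projP Γ x a e' * σ x d e' := by
    rw [Finset.mul_sum, Finset.mul_sum, ← Finset.sum_add_distrib, ← Finset.sum_sub_distrib]
    refine Finset.sum_congr rfl fun e' _ => ?_
    have hs := hσsym x e' d
    simp only [projW]
    linear_combination curv Γ x a b c e' * hs
  have hc2 : ∑ e', curv Γ x a b d e' * σ x c e'
      = ∑ e', projW Γ x a b d e' * σ x c e'
        + kron a d * ∑ e', projP Γ x b e' * σ x c e'
        - kron b d * ∑ e', projP Γ x a e' * σ x c e' := by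
    rw [Finset.mul_sum, Finset.mul_sum, ← Finset.sum_add_distrib, ← Finset.sum_sub_distrib]
    refine Finset.sum_congr rfl fun e' _ => ?_
    simp only [projW]
    ring
  have e2 : ∀ p q : Fin n, nablaVec Γ μ x p q
      = kron p q * ρ x - (∑ e', projP Γ x p e' * σ x q e')
        + (1 / (n : ℝ)) * ∑ e', ∑ f, projW Γ x p e' q f * σ x e' f :=
    fun p q => heq2 x hx p q
  linear_combination hM - hc1 - hc2 + kron b c * e2 a d + kron b d * e2 a c
    - kron a c * e2 b d - kron a d * e2 b c
end

section
/- Let n ≥ 3 and let W_{ab}{}^c{}_d be a tensor on ℝⁿ satisfying the projective Weyl symmetries: W_{ab}{}^c{}_d = −W_{ba}{}^c{}_d, the cyclic identity W_{ab}{}^c{}_d + W_{bd}{}^c{}_a + W_{da}{}^c{}_b = 0, and vanishing of all traces (W_{ab}{}^a{}_d = 0 and W_{ab}{}^c{}_c = 0, sums over repeated indices). Suppose that for every symmetric tensor σ^{cd} there exists a tensor A_b{}^d such that W_{ab}{}^c{}_e σ^{de} + W_{ab}{}^d{}_e σ^{ce} = δ_a{}^c A_b{}^d + δ_a{}^d A_b{}^c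 − δ_b{}^c A_a{}^d − δ_b{}^d A_a{}^c for all a,b,c,d. Then W = 0. -/
open scoped BigOperators

/-!
Test the hypothesis on `σ = e_p ⊗ e_p`. Its left-hand side then vanishes unless `c = p` or
`d = p`, which forces the compensating tensor `A` to be a multiple of `δ` away from the index `p`;
the trace condition `W_{ab}{}^a{}_p = 0` then determines the entries `A_b{}^p`, so `A = λ δ`.
Since `δ ∧ (λ δ) = 0`, the `p`-slice `W_{ab}{}^c{}_p` vanishes.
-/

@[simp] theorem kron_self {n : ℕ} (a : Fin n) : kron a a = 1 := if_pos rfl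

@[simp] theorem kron_of_ne {n : ℕ} {a b : Fin n} (h : a ≠ b) : kron a b = 0 := if_neg h

theorem sum_kron_mul {n : ℕ} (a : Fin n) (f : Fin n → ℝ) : ∑ e, kron e a * f e = f a := by
  simp [kron]

theorem sum_mul_kron {n : ℕ} (a : Fin n) (f : Fin n → ℝ) : ∑ e, f e * kron e a = f a := by
  simp [kron]

theorem sum_kron_mul' {n : ℕ} (a : Fin n) (f : Fin n → ℝ) : ∑ e, kron a e * f e = f a := by
  simp [kron]

/-- `(δ ∧ A)_{ab}{}^{cd}`, the right-hand side of the hypothesis. -/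
def deltaWedge {n : ℕ} (A : Fin n → Fin n → ℝ) (a b c d : Fin n) : ℝ :=
  kron a c * A b d + kron a d * A b c - kron b c * A a d - kron b d * A a c

theorem deltaWedge_smul_kron {n : ℕ} (t : ℝ) (a b c d : Fin n) :
    deltaWedge (fun b d => t * kron b d) a b c d = 0 := by
  unfold deltaWedge kron
  split_ifs <;> simp_all

theorem natCast_sub_one_ne_zero_of_ne {n : ℕ} {p q : Fin n} (h : q ≠ p) : (n : ℝ) - 1 ≠ 0 := by
  have : 2 ≤ n := by have := Fin.val_ne_of_ne h; omega
  have : (2 : ℝ) ≤ n := by exact_mod_cast this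
  linarith

/-- The hypothesis of the theorem at `σ^{cd} = δ^c{}_p δ^d{}_p`, with compensating tensor `A`. -/
def IsCompensator {n : ℕ} (W : Fin n → Fin n → Fin n → Fin n → ℝ) (p : Fin n)
    (A : Fin n → Fin n → ℝ) : Prop :=
  ∀ a b c d, W a b c p * kron d p + W a b d p * kron c p = deltaWedge A a b c d

namespace IsCompensator

variable {n : ℕ} {W : Fin n → Fin n → Fin n → Fin n → ℝ} {p : Fin n} {A : Fin n → Fin n → ℝ}

theorem deltaWedge_eq_zero (hA : IsCompensator W p A) {a b c d : Fin n} (hc : c ≠ p)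
    (hd : d ≠ p) : deltaWedge A a b c d = 0 := by
  simpa [hc, hd] using (hA a b c d).symm

theorem apply_eq_zero_of_ne (hA : IsCompensator W p A) {b d : Fin n} (hbd : b ≠ d)
    (hd : d ≠ p) : A b d = 0 := by
  have := hA.deltaWedge_eq_zero (a := d) (b := b) hd hd
  simp [deltaWedge, hbd] at this
  linarith

theorem apply_self_eq_of_ne (hA : IsCompensator W p A) {a b : Fin n} (ha : a ≠ p)
    (hb : b ≠ p) : A a a = A b b := by
  rcases eq_or_ne a b with rfl | hab
  · rfl
  have := hA.deltaWedge_eq_zero (a := a) (b := b) ha hb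
  simp [deltaWedge, hab, hab.symm] at this
  linarith

theorem trace_relation (hA : IsCompensator W p A) (htrace : ∑ a, W a b a p = 0) :
    ((n : ℝ) - 1) * A b p = kron b p * (∑ a, A a a - A p p) := by
  have hsum := Finset.sum_congr rfl fun a (_ : a ∈ Finset.univ) => hA a b a p
  have hpole := hA p b p p
  simp only [deltaWedge, kron_self, one_mul, mul_one, Finset.sum_add_distrib,
    Finset.sum_sub_distrib, htrace, sum_kron_mul, sum_kron_mul', sum_mul_kron, ← Finset.mul_sum,
    Finset.sum_const, Finset.card_univ, Fintype.card_fin, nsmul_eq_mul] at hsum hpole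
  linear_combination hpole / 2 - hsum

theorem sum_diag (hA : IsCompensator W p A) {q : Fin n} (hq : q ≠ p) :
    ∑ a, A a a = A p p + ((n : ℝ) - 1) * A q q := by
  have hdev : ∑ a, (A a a - A q q) = A p p - A q q :=
    Finset.sum_eq_single p (fun a _ ha => sub_eq_zero.2 (hA.apply_self_eq_of_ne ha hq))
      (by simp)
  rw [Finset.sum_sub_distrib] at hdev
  simp only [Finset.sum_const, Finset.card_univ, Fintype.card_fin, nsmul_eq_mul] at hdev
  linarith

theorem eq_smul_kron (hA : IsCompensator W p A) (htrace : ∀ b, ∑ a, W a b a p = 0) :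
    A = fun b d => A p p * kron b d := by
  ext b d
  rcases eq_or_ne d p with rfl | hd
  · rcases eq_or_ne b d with rfl | hbd
    · simp
    have hrel := hA.trace_relation (htrace b)
    simp only [kron_of_ne hbd, zero_mul, mul_eq_zero] at hrel
    simpa [hbd] using hrel.resolve_left (natCast_sub_one_ne_zero_of_ne hbd)
  rcases eq_or_ne b d with rfl | hbd
  · have hrel := hA.trace_relation (htrace p)
    rw [hA.sum_diag hd, kron_self, one_mul, add_sub_cancel_left] at hrel
    simpa using mul_left_cancel₀ (natCast_sub_one_ne_zero_of_ne hd) hrel.symm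
  · simpa [hbd] using hA.apply_eq_zero_of_ne hbd hd

theorem slice_eq_zero (hA : IsCompensator W p A) (htrace : ∀ b, ∑ a, W a b a p = 0)
    (a b c : Fin n) : W a b c p = 0 := by
  have hlhs : ∀ c d, W a b c p * kron d p + W a b d p * kron c p = 0 := fun c d => by
    rw [hA a b c d, hA.eq_smul_kron htrace, deltaWedge_smul_kron]
  have hpole : W a b p p = 0 := by linarith [kron_self p ▸ hlhs p p]
  simpa [hpole] using hlhs c p

end IsCompensator

theorem isCompensator_of_forall_symm {n : ℕ} {W : Fin n → Fin n → Fin n → Fin n → ℝ}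
    (h : ∀ σ : Fin n → Fin n → ℝ, (∀ c d, σ c d = σ d c) →
      ∃ A : Fin n → Fin n → ℝ, ∀ a b c d,
        (∑ e, W a b c e * σ d e) + (∑ e, W a b d e * σ c e)
          = kron a c * A b d + kron a d * A b c
            - kron b c * A a d - kron b d * A a c)
    (p : Fin n) : ∃ A, IsCompensator W p A := by
  obtain ⟨A, hA⟩ := h (fun c d => kron c p * kron d p) fun c d => mul_comm _ _
  refine ⟨A, fun a b c d => ?_⟩
  simpa only [← mul_assoc, sum_mul_kron, deltaWedge] using hA a b c d

theorem weyl_with_vanishing_tracefree_action_is_zero_general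
    {n : ℕ}
    (W : Fin n → Fin n → Fin n → Fin n → ℝ)
    (htrace1 : ∀ b d, (∑ a, W a b a d) = 0)
    (h : ∀ σ : Fin n → Fin n → ℝ, (∀ c d, σ c d = σ d c) →
      ∃ A : Fin n → Fin n → ℝ, ∀ a b c d,
        (∑ e, W a b c e * σ d e) + (∑ e, W a b d e * σ c e)
          = kron a c * A b d + kron a d * A b c
            - kron b c * A a d - kron b d * A a c) :
    ∀ a b c d, W a b c d = 0 := by
  intro a b c p
  obtain ⟨A, hA⟩ := isCompensator_of_forall_symm h p
  exact hA.slice_eq_zero (htrace1 · p) a b c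

/-- for `n ≥ 3`, a tensor with the projective Weyl symmetries
whose trace-free action `σ ↦ tf(W_{ab}{}^c{}_e σ^{de} + W_{ab}{}^d{}_e σ^{ce})`
vanishes on every symmetric `σ` must itself vanish. -/
theorem weyl_with_vanishing_tracefree_action_is_zero
    {n : ℕ} (hn : 3 ≤ n)
    (W : Fin n → Fin n → Fin n → Fin n → ℝ)
    (hanti : ∀ a b c d, W a b c d = - W b a c d)
    (hcyc : ∀ a b c d, W a b c d + W b d c a + W d a c b = 0)
    (htrace1 : ∀ b d, (∑ a, W a b a d) = 0)
    (htrace2 : ∀ a b, (∑ c, W a b c c) = 0)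
    (h : ∀ σ : Fin n → Fin n → ℝ, (∀ c d, σ c d = σ d c) →
      ∃ A : Fin n → Fin n → ℝ, ∀ a b c d,
        (∑ e, W a b c e * σ d e) + (∑ e, W a b d e * σ c e)
          = kron a c * A b d + kron a d * A b c
            - kron b c * A a d - kron b d * A a c) :
    ∀ a b c d, W a b c d = 0 :=
  weyl_with_vanishing_tracefree_action_is_zero_general W htrace1 h
end

section
/- On ℝⁿ with the flat connection Γ ≡ 0, a smooth field σ of symmetric contravariant 2-tensors satisfies the metrisability equation (i.e. there is a smooth vector field μ with ∂_a σ^{bc} = δ_a{}^b μ^c + δ_a{}^c μ^b for all a,b,c) if and only if there exist a constant symmetric tensor s^{ab}, a constant vector m^a, and a constant r ∈ ℝ such that σ^{ab}(x) = s^{ab} + x^a m^b + x^b m^a + x^a x^b r for all x ∈ ℝⁿ. -/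
open scoped BigOperators

section helpers
variable {n : ℕ}

lemma kron_diag (a : Fin n) : kron a a = 1 := by simp [kron]

lemma kron_off {a b : Fin n} (h : a ≠ b) : kron a b = 0 := by simp [kron, h]

lemma single_eq_kron (a d : Fin n) : (Pi.single a 1 : Fin n → ℝ) d = kron a d := by
  simp [Pi.single_apply, kron, eq_comm]

lemma hasFDerivAt_coord (b : Fin n) (x : Fin n → ℝ) :
    HasFDerivAt (fun y : Fin n → ℝ => y b)
      (ContinuousLinearMap.proj b : (Fin n → ℝ) →L[ℝ] ℝ) x :=
  (ContinuousLinearMap.proj b : (Fin n → ℝ) →L[ℝ] ℝ).hasFDerivAt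

lemma pd_of_hasFDerivAt {f : (Fin n → ℝ) → ℝ} {L : (Fin n → ℝ) →L[ℝ] ℝ} {x : Fin n → ℝ}
    (h : HasFDerivAt f L x) (a : Fin n) : pd f a x = L (Pi.single a 1) := by
  rw [pd, h.fderiv]

lemma hasFDerivAt_poly (s mc mb r : ℝ) (b c : Fin n) (x : Fin n → ℝ) :
    HasFDerivAt (fun y : Fin n → ℝ => s + y b * mc + y c * mb + y b * y c * r)
      (((mc : ℝ) • (ContinuousLinearMap.proj b : (Fin n → ℝ) →L[ℝ] ℝ)
        + mb • (ContinuousLinearMap.proj c : (Fin n → ℝ) →L[ℝ] ℝ))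
        + r • (x b • (ContinuousLinearMap.proj c : (Fin n → ℝ) →L[ℝ] ℝ)
          + x c • (ContinuousLinearMap.proj b : (Fin n → ℝ) →L[ℝ] ℝ))) x := by
  have h1 := ((hasFDerivAt_coord b x).mul_const mc).const_add s
  have h2 := (hasFDerivAt_coord c x).mul_const mb
  have h3 := ((hasFDerivAt_coord b x).mul (hasFDerivAt_coord c x)).mul_const r
  exact (h1.add h2).add h3

lemma pd_poly (s mc mb r : ℝ) (b c a : Fin n) (x : Fin n → ℝ) :
    pd (fun y => s + y b * mc + y c * mb + y b * y c * r) a x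
      = kron a b * mc + kron a c * mb + (kron a b * x c + kron a c * x b) * r := by
  rw [pd_of_hasFDerivAt (hasFDerivAt_poly s mc mb r b c x) a]
  simp only [ContinuousLinearMap.add_apply, ContinuousLinearMap.smul_apply,
    ContinuousLinearMap.proj_apply, smul_eq_mul, single_eq_kron]
  ring

lemma differentiable_poly (s mc mb r : ℝ) (b c : Fin n) :
    Differentiable ℝ (fun y : Fin n → ℝ => s + y b * mc + y c * mb + y b * y c * r) :=
  fun x => (hasFDerivAt_poly s mc mb r b c x).differentiableAt

lemma pd_two_comb (k1 k2 : ℝ) {f g : (Fin n → ℝ) → ℝ} (hf : Differentiable ℝ f)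
    (hg : Differentiable ℝ g) (a : Fin n) (x : Fin n → ℝ) :
    pd (fun y => k1 * f y + k2 * g y) a x = k1 * pd f a x + k2 * pd g a x := by
  have h := ((hf x).hasFDerivAt.const_mul k1).add ((hg x).hasFDerivAt.const_mul k2)
  show pd ((fun y => k1 * f y) + fun y => k2 * g y) a x = _
  rw [pd_of_hasFDerivAt h a]
  simp [pd]

lemma pd_sub {f g : (Fin n → ℝ) → ℝ} (hf : DifferentiableAt ℝ f x)
    (hg : DifferentiableAt ℝ g x) (a : Fin n) :
    pd (fun y => f y - g y) a x = pd f a x - pd g a x := by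
  simp [pd, fderiv_fun_sub hf hg]

lemma pd_const_fun (c : ℝ) (a : Fin n) (x : Fin n → ℝ) : pd (fun _ => c) a x = 0 := by
  simp [pd]

lemma pd_comm {f : (Fin n → ℝ) → ℝ} (hf : ContDiff ℝ (⊤ : ℕ∞) f) (a d : Fin n) (x : Fin n → ℝ) :
    pd (fun y => pd f a y) d x = pd (fun y => pd f d y) a x := by
  have hd : Differentiable ℝ (fderiv ℝ f) := (hf.fderiv_right (m := 1) (WithTop.coe_le_coe.mpr le_top)).differentiable (by simp)
  have key : ∀ v w : Fin n → ℝ,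
      fderiv ℝ (fun y => fderiv ℝ f y v) x w = fderiv ℝ (fderiv ℝ f) x w v := by
    intro v w
    rw [fderiv_clm_apply (hd x) (differentiableAt_const v)]
    simp
  have hsymm := (hf.contDiffAt (x := x)).isSymmSndFDerivAt (by rw [minSmoothness_of_isRCLikeNormedField]; exact WithTop.coe_le_coe.mpr le_top)
  show fderiv ℝ (fun y => fderiv ℝ f y (Pi.single a 1)) x (Pi.single d 1)
      = fderiv ℝ (fun y => fderiv ℝ f y (Pi.single d 1)) x (Pi.single a 1)
  rw [key, key, hsymm]

lemma const_of_pd_zero {f : (Fin n → ℝ) → ℝ} (hf : Differentiable ℝ f)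
    (h : ∀ x a, pd f a x = 0) (x : Fin n → ℝ) : f x = f 0 := by
  apply is_const_of_fderiv_eq_zero hf _ x 0
  intro z
  have h0 : ∀ a, fderiv ℝ f z (Pi.single a 1) = 0 := fun a => h z a
  ext v
  have hv : v = ∑ a, v a • (Pi.single a 1 : Fin n → ℝ) := by
    funext i
    simp [Finset.sum_apply, Pi.single_apply]
  rw [ContinuousLinearMap.zero_apply, hv, map_sum]
  simp [h0]

end helpers

/-- on `ℝⁿ` with the flat connection, a smooth symmetric field
`σ^{bc}` satisfies the metrisability equation iff
`σ^{ab}(x) = s^{ab} + x^a m^b + x^b m^a + x^a x^b r` for constants `s, m, r`. -/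
theorem flat_metrisability_general_solution
    {n : ℕ} (hn : 2 ≤ n)
    (σ : (Fin n → ℝ) → Fin n → Fin n → ℝ)
    (hσsym : ∀ x b c, σ x b c = σ x c b)
    (hσsm : ∀ b c, ContDiff ℝ (⊤ : ℕ∞) (fun x => σ x b c)) :
    (∃ μ : (Fin n → ℝ) → Fin n → ℝ,
      (∀ a, ContDiff ℝ (⊤ : ℕ∞) (fun x => μ x a)) ∧
      ∀ x : Fin n → ℝ, ∀ a b c,
        pd (fun y => σ y b c) a x = kron a b * μ x c + kron a c * μ x b) ↔
    (∃ s : Fin n → Fin n → ℝ, ∃ m : Fin n → ℝ, ∃ r : ℝ,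
      (∀ a b, s a b = s b a) ∧
      ∀ x : Fin n → ℝ, ∀ a b,
        σ x a b = s a b + x a * m b + x b * m a + x a * x b * r) := by
  constructor
  · rintro ⟨μ, hμsm, heq⟩
    have hμd : ∀ b, Differentiable ℝ (fun x => μ x b) :=
      fun b => (hμsm b).differentiable (by simp)
    set i0 : Fin n := ⟨0, by omega⟩ with hi0
    set j0 : Fin n := ⟨1, by omega⟩ with hj0
    have hij : i0 ≠ j0 := by simp [hi0, hj0, Fin.ext_iff]
    -- second derivatives of μ via symmetry of second derivatives of σ
    have swap : ∀ (x : Fin n → ℝ) (a d b c : Fin n),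
        kron a b * pd (fun y => μ y c) d x + kron a c * pd (fun y => μ y b) d x
          = kron d b * pd (fun y => μ y c) a x + kron d c * pd (fun y => μ y b) a x := by
      intro x a d b c
      have hfa : (fun y => pd (fun z => σ z b c) a y)
          = fun y => kron a b * μ y c + kron a c * μ y b := funext fun y => heq y a b c
      have hfd : (fun y => pd (fun z => σ z b c) d y)
          = fun y => kron d b * μ y c + kron d c * μ y b := funext fun y => heq y d b c
      have e1 : pd (fun y => pd (fun z => σ z b c) a y) d x
          = kron a b * pd (fun y => μ y c) d x + kron a c * pd (fun y => μ y b) d x := by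
        rw [hfa, pd_two_comb _ _ (hμd c) (hμd b)]
      have e2 : pd (fun y => pd (fun z => σ z b c) d y) a x
          = kron d b * pd (fun y => μ y c) a x + kron d c * pd (fun y => μ y b) a x := by
        rw [hfd, pd_two_comb _ _ (hμd c) (hμd b)]
      rw [← e1, ← e2, pd_comm (hσsm b c)]
    have offdiag : ∀ (x : Fin n → ℝ) (a d : Fin n), a ≠ d →
        pd (fun y => μ y a) d x = 0 := by
      intro x a d h
      have h1 := swap x a d a a
      rw [kron_diag, kron_off (Ne.symm h)] at h1
      simp at h1
      linarith
    have diag : ∀ (x : Fin n → ℝ) (d : Fin n),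
        pd (fun y => μ y d) d x = pd (fun y => μ y i0) i0 x := by
      intro x d
      by_cases hd : d = i0
      · rw [hd]
      · have h1 := swap x i0 d i0 d
        rw [kron_diag, kron_diag, kron_off (fun h => hd h.symm), kron_off hd] at h1
        simp at h1
        linarith
    -- the trace function ρ is constant
    have hρd : Differentiable ℝ (fun x => pd (fun y => μ y i0) i0 x) := by
      have h1 : ContDiff ℝ (⊤ : ℕ∞) (fun x => pd (fun y => μ y i0) i0 x) :=
        ((hμsm i0).fderiv_right (by simp)).clm_apply contDiff_const
      exact h1.differentiable (by simp)
    have hρpd : ∀ (x : Fin n → ℝ) (a : Fin n),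
        pd (fun y => pd (fun z => μ z i0) i0 y) a x = 0 := by
      intro x a
      by_cases ha : a = i0
      · have hfun : (fun y => pd (fun z => μ z i0) i0 y)
            = fun y => pd (fun z => μ z j0) j0 y := funext fun y => (diag y j0).symm
        rw [ha, hfun, pd_comm (hμsm j0) j0 i0 x]
        have hz : (fun y => pd (fun z => μ z j0) i0 y) = fun _ => (0:ℝ) :=
          funext fun y => offdiag y j0 i0 (Ne.symm hij)
        rw [hz, pd_const_fun]
      · rw [pd_comm (hμsm i0) i0 a x]
        have hz : (fun y => pd (fun z => μ z i0) a y) = fun _ => (0:ℝ) :=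
          funext fun y => offdiag y i0 a (fun h => ha h.symm)
        rw [hz, pd_const_fun]
    set r : ℝ := pd (fun y => μ y i0) i0 0 with hr
    have hρconst : ∀ x : Fin n → ℝ, pd (fun y => μ y i0) i0 x = r :=
      fun x => const_of_pd_zero hρd hρpd x
    have hDμ_eq : ∀ (x : Fin n → ℝ) (a b : Fin n),
        pd (fun y => μ y b) a x = kron a b * r := by
      intro x a b
      by_cases h : a = b
      · subst h
        rw [kron_diag, one_mul, diag x a, hρconst]
      · rw [offdiag x b a (fun hh => h hh.symm), kron_off h, zero_mul]
    -- μ is affine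
    have hμ_eq : ∀ (x : Fin n → ℝ) (b : Fin n), μ x b = μ 0 b + x b * r := by
      intro x b
      have hgd : Differentiable ℝ (fun y : Fin n → ℝ => μ y b - y b * r) :=
        (hμd b).sub fun y => ((hasFDerivAt_coord b y).mul_const r).differentiableAt
      have hgpd : ∀ (z : Fin n → ℝ) (a : Fin n),
          pd (fun y => μ y b - y b * r) a z = 0 := by
        intro z a
        have hD : pd (fun y => μ y b) a z = kron a b * r := hDμ_eq z a b
        rw [pd_sub (hμd b z) ((hasFDerivAt_coord b z).mul_const r).differentiableAt a,
          hD, pd_of_hasFDerivAt ((hasFDerivAt_coord b z).mul_const r) a]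
        simp [single_eq_kron]
        ring
      have h := const_of_pd_zero hgd hgpd x
      simp only [Pi.zero_apply, zero_mul, sub_zero] at h
      linarith [h]
    -- conclude for σ
    refine ⟨fun b c => σ 0 b c, fun b => μ 0 b, r, fun a b => hσsym 0 a b, ?_⟩
    intro x b c
    have hPd : Differentiable ℝ
        (fun y : Fin n → ℝ => (0:ℝ) + y b * μ 0 c + y c * μ 0 b + y b * y c * r) :=
      differentiable_poly 0 (μ 0 c) (μ 0 b) r b c
    have hhpd : ∀ (z : Fin n → ℝ) (a : Fin n),
        pd (fun y => σ y b c
          - ((0:ℝ) + y b * μ 0 c + y c * μ 0 b + y b * y c * r)) a z = 0 := by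
      intro z a
      rw [pd_sub ((hσsm b c).differentiable (by simp) z) (hPd z) a, heq z a b c,
        pd_poly 0 (μ 0 c) (μ 0 b) r b c a z, hμ_eq z b, hμ_eq z c]
      ring
    have hhd : Differentiable ℝ (fun y : Fin n → ℝ => σ y b c
        - ((0:ℝ) + y b * μ 0 c + y c * μ 0 b + y b * y c * r)) :=
      ((hσsm b c).differentiable (by simp)).sub hPd
    have h := const_of_pd_zero hhd hhpd x
    simp only [Pi.zero_apply, zero_mul, mul_zero, add_zero, zero_add, sub_zero] at h
    have h0 : ((0:Fin n → ℝ)) b * μ 0 c = 0 := by simp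
    -- h : σ x b c - (x b * μ 0 c + x c * μ 0 b + x b * x c * r) = σ 0 b c - 0
    nlinarith [h]
  · rintro ⟨s, m, r, hssym, hval⟩
    refine ⟨fun x c => m c + x c * r, ?_, ?_⟩
    · intro a
      exact contDiff_const.add
        ((ContinuousLinearMap.proj a : (Fin n → ℝ) →L[ℝ] ℝ).contDiff.mul contDiff_const)
    · intro x a b c
      have hfun : (fun y => σ y b c)
          = fun y => s b c + y b * m c + y c * m b + y b * y c * r :=
        funext fun y => hval y b c
      rw [hfun, pd_poly]
      ring
end
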